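/- arXiv:2206.06218 — 7 statements merged into one kernel-verified Lean document; each statement's English description precedes it below -/
import Mathlib

section
/- Let G be a stable graph with vertex set [n] with matching number ν(G) = m, where n ≥ 2m + 2, and let r := max{ i ≥ 0 : ν(G − [i]) = ν(G) − i } (where G − [0] = G). Then G is a subgraph of A^r_{n,m}, i.e., every edge {a, b} of G with a < b satisfies a ≤ r or b ≤ 2m − r + 1. -/
/-! If `G` had an edge `{a, b}` with `r < a` and `2m - r + 1 < b`, stability would put
`{r + 1, 2m - r + 2}` in `G`. Maximality of `r` forces `ν(G - [r+1]) = ν(G - [r]) = m - r`, and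
a maximum matching of `G - [r+1]` can be pushed down, again by stability, onto the vertices
`r + 2, …, 2m - r + 1`. Adding `{r + 1, 2m - r + 2}` then gives a matching of size `m - r + 1`
in `G - [r]`. -/

open Finset

/-- `F₁ ≺ F₂`: same size, and the `i`-th smallest element of `F₁` is at most
the `i`-th smallest element of `F₂`. -/
def PrecS (A B : Finset ℕ) : Prop :=
  A.card = B.card ∧
    ∀ i, i < A.card → (A.sort (· ≤ ·)).getD i 0 ≤ (B.sort (· ≤ ·)).getD i 0

/-- A family of subsets of `[n] = {1,…,n}` is stable (shifted). -/
def IsStable (n : ℕ) (F : Finset (Finset ℕ)) : Prop :=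
  ∀ A B : Finset ℕ, A ⊆ Finset.Icc 1 n → B ∈ F → PrecS A B → A ∈ F

/-- Property `U(s, q)`: any `s` edges (repetitions allowed) have union of size at most `q`. -/
def HasU (F : Finset (Finset ℕ)) (s q : ℕ) : Prop :=
  ∀ f : Fin s → Finset ℕ, (∀ i, f i ∈ F) → (Finset.univ.biUnion f).card ≤ q

/-- Matching number: the maximum size of a set of pairwise disjoint edges of `F`. -/
def matchNum (F : Finset (Finset ℕ)) : ℕ :=
  (F.powerset.filter fun M => ∀ a ∈ M, ∀ b ∈ M, a ≠ b → Disjoint a b).sup Finset.card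

/-- Shadow of a 3-uniform family: all 2-element subsets of its edges. -/
def shadow2 (F : Finset (Finset ℕ)) : Finset (Finset ℕ) :=
  F.biUnion fun f => f.powersetCard 2

/-- Deletion of the first `i` vertices: edges disjoint from `[i] = {1,…,i}`. -/
def del (F : Finset (Finset ℕ)) (i : ℕ) : Finset (Finset ℕ) :=
  F.filter fun e => Disjoint e (Finset.Icc 1 i)

lemma sort_pair {x y : ℕ} (h : x < y) : ({x, y} : Finset ℕ).sort (· ≤ ·) = [x, y] := by
  rw [sort_insert (r := (· ≤ ·)) (by simp [h.le]) (by simp [h.ne]), sort_singleton]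

lemma precS_pair {x₁ y₁ x₂ y₂ : ℕ} (h₁ : x₁ < y₁) (h₂ : x₂ < y₂) (hx : x₁ ≤ x₂) (hy : y₁ ≤ y₂) :
    PrecS {x₁, y₁} {x₂, y₂} := by
  refine ⟨by rw [card_pair h₁.ne, card_pair h₂.ne], fun i hi => ?_⟩
  rw [card_pair h₁.ne] at hi
  rw [sort_pair h₁, sort_pair h₂]
  interval_cases i <;> simpa

lemma eq_pair_of_card_eq_two {α : Type*} [DecidableEq α] {e : Finset α} {a b : α} (he : #e = 2)
    (ha : a ∈ e) (hb : b ∈ e) (hab : a ≠ b) : e = {a, b} :=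
  (eq_of_subset_of_card_le (insert_subset ha (singleton_subset_iff.2 hb))
    (by rw [he, card_pair hab])).symm

lemma IsStable.pair_mem {n : ℕ} {G : Finset (Finset ℕ)} (hst : IsStable n G)
    {x₁ y₁ x₂ y₂ : ℕ} (he : {x₂, y₂} ∈ G) (h₁ : x₁ < y₁) (h₂ : x₂ < y₂) (hx : x₁ ≤ x₂)
    (hy : y₁ ≤ y₂) (hx₁ : 1 ≤ x₁) (hy₁ : y₁ ≤ n) : {x₁, y₁} ∈ G := by
  refine hst _ _ (fun u hu => ?_) he (precS_pair h₁ h₂ hx hy)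
  simp only [mem_insert, mem_singleton] at hu
  rcases hu with rfl | rfl <;> simp only [mem_Icc] <;> omega

lemma IsStable.image_mem {n : ℕ} {G : Finset (Finset ℕ)} (hst : IsStable n G)
    {e : Finset ℕ} (he : e ∈ G) (hen : e ⊆ Icc 1 n) (he2 : #e = 2) {φ : ℕ → ℕ}
    (hφ : StrictMonoOn φ e) (hφe : ∀ v ∈ e, 1 ≤ φ v ∧ φ v ≤ v) : e.image φ ∈ G := by
  obtain ⟨x, y, hxy, rfl⟩ := card_eq_two.1 he2
  clear he2
  wlog h : x < y generalizing x y
  · rw [pair_comm] at he hen hφ hφe ⊢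
    exact this y x hxy.symm he hen hφ hφe (by omega)
  have hx := hφe x (by simp)
  have hy := hφe y (by simp)
  have hyn := mem_Icc.1 (hen (by simp : y ∈ ({x, y} : Finset ℕ)))
  rw [image_insert, image_singleton]
  exact hst.pair_mem he (hφ (by simp) (by simp) h) h hx.2 hy.2 hx.1 (by omega)

section Matching

variable {F F' M : Finset (Finset ℕ)}

lemma card_le_matchNum (hMF : M ⊆ F) (hM : (M : Set (Finset ℕ)).PairwiseDisjoint id) :
    #M ≤ matchNum F :=
  le_sup (mem_filter.2 ⟨mem_powerset.2 hMF, hM⟩)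

lemma exists_matching_card_eq_matchNum (F : Finset (Finset ℕ)) :
    ∃ M ⊆ F, (M : Set (Finset ℕ)).PairwiseDisjoint id ∧ #M = matchNum F := by
  obtain ⟨M, hM, hcard⟩ := exists_mem_eq_sup
    (F.powerset.filter fun M => ∀ a ∈ M, ∀ b ∈ M, a ≠ b → Disjoint a b) ⟨∅, by simp⟩ card
  rw [mem_filter, mem_powerset] at hM
  exact ⟨M, hM.1, hM.2, hcard.symm⟩

lemma matchNum_mono (h : F ⊆ F') : matchNum F ≤ matchNum F' :=
  sup_mono (filter_subset_filter _ (powerset_mono.2 h))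

lemma matchNum_le_matchNum_filter_notMem_add_one (F : Finset (Finset ℕ)) (v : ℕ) :
    matchNum F ≤ matchNum (F.filter (v ∉ ·)) + 1 := by
  obtain ⟨M, hMF, hM, hcard⟩ := exists_matching_card_eq_matchNum F
  have hthrough : #(M.filter (v ∈ ·)) ≤ 1 := card_le_one.2 fun f hf g hg => by
    rw [mem_filter] at hf hg
    by_contra hfg
    exact disjoint_left.1 (hM hf.1 hg.1 hfg) hf.2 hg.2
  have havoid : #(M.filter (v ∉ ·)) ≤ matchNum (F.filter (v ∉ ·)) :=
    card_le_matchNum (filter_subset_filter _ hMF) (hM.subset (coe_subset.2 (filter_subset _ _)))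
  have := card_filter_add_card_filter_not (s := M) (v ∈ ·)
  omega

lemma card_add_one_le_matchNum {e : Finset ℕ} (hMF : M ⊆ F)
    (hM : (M : Set (Finset ℕ)).PairwiseDisjoint id) (heF : e ∈ F) (he : e.Nonempty)
    (hdisj : ∀ f ∈ M, Disjoint e f) : #M + 1 ≤ matchNum F := by
  have heM : e ∉ M := fun h => he.ne_empty (disjoint_self.1 (hdisj e h))
  rw [← card_insert_of_notMem heM]
  refine card_le_matchNum (insert_subset heF hMF) ?_
  rw [coe_insert]
  exact hM.insert fun f hf _ => hdisj f hf

end Matching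

section Deletion

variable {F : Finset (Finset ℕ)} {e : Finset ℕ} {i : ℕ}

lemma mem_del_of_lt (he : e ∈ F) (h : ∀ v ∈ e, i < v) : e ∈ del F i :=
  mem_filter.2 ⟨he, disjoint_left.2 fun v hv hv' => by have := h v hv; rw [mem_Icc] at hv'; omega⟩

lemma lt_of_mem_del (he : e ∈ del F i) {v : ℕ} (hv : v ∈ e) (h1 : 1 ≤ v) : i < v := by
  have := disjoint_left.1 (mem_filter.1 he).2 hv
  simp only [mem_Icc, not_and, not_le] at this
  exact this h1

lemma del_succ (F : Finset (Finset ℕ)) (i : ℕ) :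
    del F (i + 1) = (del F i).filter (i + 1 ∉ ·) := by
  ext e
  simp only [del, mem_filter, disjoint_left, mem_Icc]
  constructor
  · rintro ⟨he, h⟩
    exact ⟨⟨he, fun v hv hv' => h hv ⟨hv'.1, by omega⟩⟩, fun hv => h hv ⟨by omega, le_rfl⟩⟩
  · rintro ⟨⟨he, h⟩, hi⟩
    refine ⟨he, fun v hv hv' => ?_⟩
    rcases hv'.2.lt_or_eq with hlt | rfl
    · exact h hv ⟨hv'.1, by omega⟩
    · exact hi hv

lemma matchNum_del_succ_le (F : Finset (Finset ℕ)) (i : ℕ) :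
    matchNum (del F (i + 1)) ≤ matchNum (del F i) := by
  rw [del_succ]
  exact matchNum_mono (filter_subset _ _)

lemma matchNum_del_le_succ_add_one (F : Finset (Finset ℕ)) (i : ℕ) :
    matchNum (del F i) ≤ matchNum (del F (i + 1)) + 1 := by
  rw [del_succ]
  exact matchNum_le_matchNum_filter_notMem_add_one _ _

end Deletion

section ImageMatching

variable {α β : Type*} [DecidableEq α] [DecidableEq β] {M : Finset (Finset α)} {φ : α → β}

lemma disjoint_image_of_injOn {s t : Finset α} (hφ : Set.InjOn φ ↑(s ∪ t))
    (hst : Disjoint s t) : Disjoint (s.image φ) (t.image φ) := by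
  rw [disjoint_iff_inter_eq_empty, ← image_inter_of_injOn s t (by simpa using hφ),
    disjoint_iff_inter_eq_empty.1 hst, image_empty]

lemma pairwiseDisjoint_image_of_injOn_biUnion (hM : (M : Set (Finset α)).PairwiseDisjoint id)
    (hφ : Set.InjOn φ ↑(M.biUnion id)) : (M : Set (Finset α)).PairwiseDisjoint (image φ) :=
  fun _ hf _ hg hfg => disjoint_image_of_injOn
    (hφ.mono (coe_subset.2 (union_subset (subset_biUnion_of_mem id hf)
      (subset_biUnion_of_mem id hg)))) (hM hf hg hfg)

lemma injOn_image_of_injOn_biUnion (hM : (M : Set (Finset α)).PairwiseDisjoint id)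
    (hne : ∀ f ∈ M, f.Nonempty) (hφ : Set.InjOn φ ↑(M.biUnion id)) :
    Set.InjOn (image φ) M := fun f hf g hg hfg => by
  by_contra hne'
  obtain ⟨v, hv⟩ := hne f hf
  exact disjoint_left.1 (pairwiseDisjoint_image_of_injOn_biUnion hM hφ hf hg hne')
    (mem_image_of_mem φ hv) (hfg ▸ mem_image_of_mem φ hv)

end ImageMatching

section Rank

variable {S : Finset ℕ} {v w : ℕ}

def rankIn (S : Finset ℕ) (v : ℕ) : ℕ := #(S.filter (· ≤ v))

lemma rankIn_lt_rankIn (hw : w ∈ S) (h : v < w) : rankIn S v < rankIn S w :=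
  card_lt_card <| (ssubset_iff_of_subset fun x hx => by
      rw [mem_filter] at hx ⊢; exact ⟨hx.1, hx.2.trans h.le⟩).2
    ⟨w, mem_filter.2 ⟨hw, le_rfl⟩, fun hw' => (mem_filter.1 hw').2.not_gt h⟩

lemma strictMonoOn_rankIn (S : Finset ℕ) : StrictMonoOn (rankIn S) S :=
  fun _ _ _ hw h => rankIn_lt_rankIn hw h

lemma rankIn_pos (hv : v ∈ S) : 0 < rankIn S v :=
  card_pos.2 ⟨v, mem_filter.2 ⟨hv, le_rfl⟩⟩

lemma rankIn_le_card (S : Finset ℕ) (v : ℕ) : rankIn S v ≤ #S :=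
  card_filter_le _ _

lemma add_rankIn_le {s : ℕ} (hS : ∀ x ∈ S, s < x) (hv : v ∈ S) : s + rankIn S v ≤ v := by
  have : rankIn S v ≤ #(Icc (s + 1) v) := card_le_card fun x hx => by
    rw [mem_filter] at hx
    exact mem_Icc.2 ⟨hS x hx.1, hx.2⟩
  have hsv := hS v hv
  rw [Nat.card_Icc] at this
  omega

end Rank

/-- Relabel each vertex by `s` plus its rank in the support of `M`; stability keeps the
relabelled edges in `G`. -/
theorem IsStable.exists_matching_subset_Icc {n : ℕ} {G : Finset (Finset ℕ)}
    (hG : ∀ e ∈ G, e ⊆ Icc 1 n ∧ #e = 2) (hst : IsStable n G) {s : ℕ}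
    {M : Finset (Finset ℕ)} (hMG : M ⊆ del G s) (hM : (M : Set (Finset ℕ)).PairwiseDisjoint id) :
    ∃ M' ⊆ G, (M' : Set (Finset ℕ)).PairwiseDisjoint id ∧ #M' = #M ∧
      ∀ e ∈ M', e ⊆ Icc (s + 1) (s + 2 * #M) := by
  have hMG' : ∀ f ∈ M, f ∈ G := fun f hf => (mem_filter.1 (hMG hf)).1
  set S := M.biUnion id
  have hfS : ∀ f ∈ M, f ⊆ S := fun f hf => subset_biUnion_of_mem id hf
  have hS : ∀ v ∈ S, s < v := fun v hv => by
    obtain ⟨f, hf, hvf⟩ := mem_biUnion.1 hv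
    exact lt_of_mem_del (hMG hf) hvf (mem_Icc.1 ((hG f (hMG' f hf)).1 hvf)).1
  have hScard : #S = 2 * #M := by
    rw [card_biUnion hM]
    simp only [id]
    rw [sum_congr rfl fun f hf => (hG f (hMG' f hf)).2, sum_const, smul_eq_mul,
      mul_comm]
  set φ : ℕ → ℕ := fun v => s + rankIn S v
  have hφ : StrictMonoOn φ S := fun _ hv _ hw h =>
    Nat.add_lt_add_left (strictMonoOn_rankIn S hv hw h) s
  have hφS : ∀ v ∈ S, s + 1 ≤ φ v ∧ φ v ≤ s + 2 * #M ∧ φ v ≤ v := fun v hv => by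
    simp only [φ]
    have := rankIn_pos hv
    have := rankIn_le_card S v
    exact ⟨by omega, by omega, add_rankIn_le hS hv⟩
  have hinj : Set.InjOn (image φ) M := injOn_image_of_injOn_biUnion hM
    (fun f hf => card_pos.1 (by rw [(hG f (hMG' f hf)).2]; omega)) hφ.injOn
  refine ⟨M.image (image φ), fun e he => ?_, ?_, card_image_of_injOn hinj, fun e he => ?_⟩
  · obtain ⟨f, hf, rfl⟩ := mem_image.1 he
    refine hst.image_mem (hMG' f hf) (hG f (hMG' f hf)).1 (hG f (hMG' f hf)).2
      (hφ.mono (by simpa using hfS f hf)) fun v hv => ?_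
    have := hφS v (hfS f hf hv)
    omega
  · rw [coe_image]
    exact hinj.pairwiseDisjoint_image.2 (pairwiseDisjoint_image_of_injOn_biUnion hM hφ.injOn)
  · obtain ⟨f, hf, rfl⟩ := mem_image.1 he
    intro u hu
    obtain ⟨v, hv, rfl⟩ := mem_image.1 hu
    have := hφS v (hfS f hf hv)
    exact mem_Icc.2 ⟨this.1, this.2.1⟩

theorem stable_subgraph_A_general (n m r : ℕ) (G : Finset (Finset ℕ))
    (hG : ∀ e ∈ G, e ⊆ Finset.Icc 1 n ∧ e.card = 2)
    (hst : IsStable n G)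
    (hr : matchNum (del G r) + r = m)
    (hrmax : ∀ i, matchNum (del G i) + i = m → i ≤ r) :
    ∀ e ∈ G, ∀ a ∈ e, ∀ b ∈ e, a < b → a ≤ r ∨ b ≤ 2 * m - r + 1 := by
  intro e he a ha b hb hab
  by_contra! ⟨har, hbr⟩
  have hbn : b ≤ n := (mem_Icc.1 ((hG e he).1 hb)).2
  set c := 2 * m - r + 2
  have hc : ({r + 1, c} : Finset ℕ) ∈ del G r := by
    rw [eq_pair_of_card_eq_two (hG e he).2 ha hb hab.ne] at he
    refine mem_del_of_lt
      (hst.pair_mem he (by omega) hab (by omega) (by omega) (by omega) (by omega)) ?_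
    simp only [mem_insert, mem_singleton, forall_eq_or_imp, forall_eq]
    omega
  have hν : matchNum (del G (r + 1)) = matchNum (del G r) := by
    have := matchNum_del_succ_le G r
    have := matchNum_del_le_succ_add_one G r
    have := hrmax (r + 1)
    omega
  obtain ⟨M, hMG, hM, hMcard⟩ := exists_matching_card_eq_matchNum (del G (r + 1))
  obtain ⟨M', hM'G, hM', hM'card, hM'Icc⟩ := hst.exists_matching_subset_Icc hG hMG hM
  rw [hMcard, hν] at hM'Icc
  have hM'del : M' ⊆ del G r := fun f hf =>
    mem_del_of_lt (hM'G hf) fun v hv => by have := mem_Icc.1 (hM'Icc f hf hv); omega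
  have hcM' : ∀ f ∈ M', Disjoint ({r + 1, c} : Finset ℕ) f := fun f hf =>
    disjoint_left.2 fun v hv hvf => by
      have := mem_Icc.1 (hM'Icc f hf hvf)
      simp only [mem_insert, mem_singleton] at hv
      omega
  have := card_add_one_le_matchNum hM'del hM' hc (insert_nonempty _ _) hcM'
  omega

/-- Lemma 2.1: a stable graph with matching number m and
r = max { i : nu(G - [i]) = nu(G) - i } is a subgraph of A^r_{n,m}. -/
theorem stable_subgraph_A (n m r : ℕ) (G : Finset (Finset ℕ))
    (hG : ∀ e ∈ G, e ⊆ Finset.Icc 1 n ∧ e.card = 2)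
    (hst : IsStable n G)
    (hnu : matchNum G = m)
    (hn : 2 * m + 2 ≤ n)
    (hr : matchNum (del G r) + r = m)
    (hrmax : ∀ i, matchNum (del G i) + i = m → i ≤ r) :
    ∀ e ∈ G, ∀ a ∈ e, ∀ b ∈ e, a < b → a ≤ r ∨ b ≤ 2 * m - r + 1 :=
  stable_subgraph_A_general n m r G hG hst hr hrmax
end

section
/- Let G be a stable graph with vertex set [n], where n ≥ 2s, with matching number ν(G) = s. Then {i, 2s − i + 1} is an edge of G for every 1 ≤ i ≤ s; that is, {{i, 2s − i + 1} : 1 ≤ i ≤ s} is a matching of size s in G. -/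
/-!
If `{i, 2s - i + 1}` were not an edge, stability would force every edge `{x < y}` to have
`x < i` or `y ≤ 2s - i`. In a matching at most `i - 1` edges meet `[1, i - 1]`, and the
others lie inside `[i, 2s - i]`, which has only `2s - 2i + 1` vertices; so a matching has at
most `(i - 1) + (s - i) < s` edges.
-/

open Finset

section PairwiseDisjoint

variable {α : Type*} [DecidableEq α] {M : Finset (Finset α)}

theorem sum_card_inter_le_of_pairwiseDisjoint (hM : (M : Set (Finset α)).PairwiseDisjoint id)
    (J : Finset α) : ∑ e ∈ M, (e ∩ J).card ≤ J.card := by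
  rw [← card_biUnion (hM.mono fun e => show e ∩ J ⊆ e from inter_subset_left)]
  exact card_le_card (biUnion_subset.2 fun _ _ => inter_subset_right)

theorem card_le_card_of_pairwiseDisjoint_of_inter_nonempty
    (hM : (M : Set (Finset α)).PairwiseDisjoint id) {J : Finset α}
    (hJ : ∀ e ∈ M, (e ∩ J).Nonempty) : M.card ≤ J.card :=
  calc M.card = ∑ _e ∈ M, 1 := card_eq_sum_ones M
    _ ≤ ∑ e ∈ M, (e ∩ J).card := sum_le_sum fun e he => (hJ e he).card_pos
    _ ≤ J.card := sum_card_inter_le_of_pairwiseDisjoint hM J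

theorem mul_card_le_card_of_pairwiseDisjoint_of_subset
    (hM : (M : Set (Finset α)).PairwiseDisjoint id) {k : ℕ} (hk : ∀ e ∈ M, e.card = k)
    {J : Finset α} (hJ : ∀ e ∈ M, e ⊆ J) : k * M.card ≤ J.card :=
  calc k * M.card = ∑ e ∈ M, (e ∩ J).card := by
        rw [sum_congr rfl fun e he => by rw [inter_eq_left.2 (hJ e he), hk e he], sum_const,
          smul_eq_mul, mul_comm]
    _ ≤ J.card := sum_card_inter_le_of_pairwiseDisjoint hM J

end PairwiseDisjoint

theorem two_mul_card_le_of_forall_exists_lt_or_forall_lt {M : Finset (Finset ℕ)}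
    (hM : (M : Set (Finset ℕ)).PairwiseDisjoint id) (h2 : ∀ e ∈ M, e.card = 2)
    (hpos : ∀ e ∈ M, ∀ x ∈ e, 1 ≤ x) {a b : ℕ}
    (hab : ∀ e ∈ M, (∃ x ∈ e, x < a) ∨ ∀ x ∈ e, x < b) :
    2 * M.card ≤ 2 * (a - 1) + (b - a) := by
  have h_low : (M.filter fun e => ∃ x ∈ e, x < a).card ≤ (Ico 1 a).card := by
    refine card_le_card_of_pairwiseDisjoint_of_inter_nonempty
      (hM.subset (filter_subset _ M)) fun e he => ?_
    obtain ⟨he, x, hx, hxa⟩ := mem_filter.1 he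
    exact ⟨x, mem_inter.2 ⟨hx, mem_Ico.2 ⟨hpos e he x hx, hxa⟩⟩⟩
  have h_high : 2 * (M.filter fun e => ¬∃ x ∈ e, x < a).card ≤ (Ico a b).card := by
    refine mul_card_le_card_of_pairwiseDisjoint_of_subset (hM.subset (filter_subset _ M))
      (fun e he => h2 e (mem_filter.1 he).1) fun e he x hx => ?_
    obtain ⟨he, hlow⟩ := mem_filter.1 he
    refine mem_Ico.2 ⟨?_, (hab e he).resolve_left hlow x hx⟩
    by_contra! hxa
    exact hlow ⟨x, hx, hxa⟩
  have := card_filter_add_card_filter_not (s := M) fun e => ∃ x ∈ e, x < a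
  rw [Nat.card_Ico] at h_low h_high
  omega

theorem exists_pairwiseDisjoint_card_eq_matchNum (F : Finset (Finset ℕ)) :
    ∃ M ⊆ F, (M : Set (Finset ℕ)).PairwiseDisjoint id ∧ M.card = matchNum F := by
  obtain ⟨M, hM, hcard⟩ := exists_mem_eq_sup
    (F.powerset.filter fun M => ∀ a ∈ M, ∀ b ∈ M, a ≠ b → Disjoint a b) ⟨∅, by simp⟩ card
  obtain ⟨hMF, hdisj⟩ := mem_filter.1 hM
  exact ⟨M, mem_powerset.1 hMF, fun a ha b hb hab => hdisj a ha b hb hab, hcard.symm⟩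

theorem sort_pair_s2 {α : Type*} [LinearOrder α] {a b : α} (h : a < b) :
    ({a, b} : Finset α).sort (· ≤ ·) = [a, b] := by
  rw [sort_insert _ (by simpa using h.le) (by simpa using h.ne), sort_singleton]

namespace IsStable

variable {n : ℕ} {G : Finset (Finset ℕ)}

theorem pair_mem_s2 (hst : IsStable n G) {a b c d : ℕ} (hcd : ({c, d} : Finset ℕ) ∈ G)
    (hab : a < b) (hcd' : c < d) (hac : a ≤ c) (hbd : b ≤ d) (ha : 1 ≤ a) (hbn : b ≤ n) :
    ({a, b} : Finset ℕ) ∈ G := by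
  refine hst {a, b} {c, d} ?_ hcd ⟨by rw [card_pair hab.ne, card_pair hcd'.ne], fun i hi => ?_⟩
  · intro x hx
    rw [mem_insert, mem_singleton] at hx
    rw [mem_Icc]
    omega
  · rw [card_pair hab.ne] at hi
    rw [sort_pair_s2 hab, sort_pair_s2 hcd']
    interval_cases i <;> simpa

theorem exists_lt_or_forall_lt (hst : IsStable n G) {a b : ℕ} (hab : a < b) (ha : 1 ≤ a)
    (hbn : b ≤ n) (hnot : ({a, b} : Finset ℕ) ∉ G) {e : Finset ℕ} (he : e ∈ G)
    (h2 : e.card = 2) : (∃ x ∈ e, x < a) ∨ ∀ x ∈ e, x < b := by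
  obtain ⟨x, y, hxy, rfl⟩ := card_eq_two.1 h2
  clear h2
  wlog hlt : x < y generalizing x y
  · rw [pair_comm] at he ⊢
    exact this y x hxy.symm he (by omega)
  by_contra! hge
  simp only [mem_insert, mem_singleton, forall_eq_or_imp, forall_eq, exists_eq_or_imp] at hge
  exact hnot (hst.pair_mem_s2 he hab hlt hge.1.1 (by omega) ha hbn)

end IsStable

/-- Lemma 2.2: a stable graph with matching number s contains the matching
consisting of the pairs {i, 2s-i+1} for 1 ≤ i ≤ s. -/
theorem stable_matching (n s : ℕ) (G : Finset (Finset ℕ))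
    (hG : ∀ e ∈ G, e ⊆ Finset.Icc 1 n ∧ e.card = 2)
    (hst : IsStable n G)
    (hn : 2 * s ≤ n)
    (hnu : matchNum G = s) :
    ∀ i, 1 ≤ i → i ≤ s → ({i, 2 * s - i + 1} : Finset ℕ) ∈ G := by
  intro i hi his
  by_contra hnot
  obtain ⟨M, hMG, hM, hMcard⟩ := exists_pairwiseDisjoint_card_eq_matchNum G
  have := two_mul_card_le_of_forall_exists_lt_or_forall_lt hM
    (fun e he => (hG e (hMG he)).2)
    (fun e he x hx => (mem_Icc.1 ((hG e (hMG he)).1 hx)).1)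
    (fun e he => hst.exists_lt_or_forall_lt (by omega) hi (by omega) hnot (hMG he)
      (hG e (hMG he)).2)
  omega
end

section
/- Let k, s, q be integers with s ≥ 2 and 2 ≤ k ≤ q < sk. If a family F of k-element subsets of [n] has property U(s, q), then there exists a stable family F′ of k-element subsets of [n] that has property U(s, q) and satisfies |F′| = |F|. -/
open Finset

lemma sort_getD_eq (A : Finset ℕ) {i : ℕ} (hi : i < A.card) :
    (A.sort (· ≤ ·)).getD i 0 = A.orderEmbOfFin rfl ⟨i, hi⟩ := by
  rw [List.getD_eq_getElem _ _ (by rw [Finset.length_sort]; exact hi),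
    Finset.orderEmbOfFin_apply]
  rfl

lemma countL (A : Finset ℕ) {i : ℕ} (hi : i < A.card) (m : ℕ) :
    (A.sort (· ≤ ·)).getD i 0 ≤ m ↔ i < (A.filter (· ≤ m)).card := by
  set f := A.orderEmbOfFin rfl with hf
  have hrange : ∀ x, x ∈ A ↔ ∃ j, f j = x := by
    intro x
    conv_lhs => rw [← Finset.mem_coe, ← Finset.range_orderEmbOfFin A rfl]
    exact Set.mem_range
  have himg : A.filter (· ≤ m) = (Finset.univ.filter (fun j => f j ≤ m)).image f := by
    ext x
    simp only [mem_filter, mem_image, mem_univ, true_and]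
    constructor
    · rintro ⟨hx, hxm⟩
      obtain ⟨j, rfl⟩ := (hrange x).mp hx
      exact ⟨j, hxm, rfl⟩
    · rintro ⟨j, hj, rfl⟩
      exact ⟨(hrange _).mpr ⟨j, rfl⟩, hj⟩
  have hcard : (A.filter (· ≤ m)).card = (Finset.univ.filter (fun j => f j ≤ m)).card := by
    rw [himg, Finset.card_image_of_injective _ f.injective]
  rw [sort_getD_eq A hi, hcard]
  constructor
  · intro h
    calc i < (Finset.Iic (⟨i, hi⟩ : Fin A.card)).card := by rw [Fin.card_Iic]; simp
    _ ≤ _ := by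
        apply Finset.card_le_card
        intro j hj
        simp only [Finset.mem_Iic] at hj
        simp only [mem_filter, mem_univ, true_and]
        exact le_trans (f.monotone hj) h
  · intro h
    by_contra hc
    push_neg at hc
    have : (Finset.univ.filter (fun j => f j ≤ m)) ⊆ Finset.Iio (⟨i, hi⟩ : Fin A.card) := by
      intro j hj
      simp only [mem_filter, mem_univ, true_and] at hj
      simp only [Finset.mem_Iio]
      by_contra hji
      push_neg at hji
      exact absurd (le_trans (f.monotone hji) hj) (not_le.mpr hc)
    have := Finset.card_le_card this
    rw [Fin.card_Iio] at this
    simp at this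
    omega

lemma precS_iff (A B : Finset ℕ) :
    PrecS A B ↔ A.card = B.card ∧
      ∀ m, (B.filter (· ≤ m)).card ≤ (A.filter (· ≤ m)).card := by
  constructor
  · rintro ⟨hc, h⟩
    refine ⟨hc, fun m => ?_⟩
    by_contra hlt
    push_neg at hlt
    set i := (A.filter (· ≤ m)).card with hi
    have hiA : i < A.card := by
      have h1 : (B.filter (· ≤ m)).card ≤ B.card := Finset.card_le_card (filter_subset _ _)
      omega
    have hiB : i < B.card := hc ▸ hiA
    have hBm : (B.sort (· ≤ ·)).getD i 0 ≤ m := (countL B hiB m).mpr hlt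
    have hAm : (A.sort (· ≤ ·)).getD i 0 ≤ m := le_trans (h i hiA) hBm
    have := (countL A hiA m).mp hAm
    omega
  · rintro ⟨hc, h⟩
    refine ⟨hc, fun i hi => ?_⟩
    have hiB : i < B.card := hc ▸ hi
    set m := (B.sort (· ≤ ·)).getD i 0 with hm
    have : i < (B.filter (· ≤ m)).card := (countL B hiB m).mp le_rfl
    have : i < (A.filter (· ≤ m)).card := lt_of_lt_of_le this (h m)
    exact (countL A hi m).mpr this

def shiftE (i j : ℕ) (e : Finset ℕ) : Finset ℕ := insert i (e.erase j)

def shiftMap (i j : ℕ) (F : Finset (Finset ℕ)) (e : Finset ℕ) : Finset ℕ :=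
  if j ∈ e ∧ i ∉ e ∧ shiftE i j e ∉ F then shiftE i j e else e

def shiftF (i j : ℕ) (F : Finset (Finset ℕ)) : Finset (Finset ℕ) :=
  F.image (shiftMap i j F)

lemma j_notMem_shiftE {i j : ℕ} (hij : i ≠ j) (e : Finset ℕ) : j ∉ shiftE i j e := by
  simp [shiftE, hij.symm]

lemma card_shiftE {i j : ℕ} {e : Finset ℕ} (hj : j ∈ e) (hi : i ∉ e) :
    (shiftE i j e).card = e.card := by
  rw [shiftE, Finset.card_insert_of_notMem (fun h => hi (Finset.mem_of_mem_erase h)),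
    Finset.card_erase_of_mem hj]
  have : 1 ≤ e.card := Finset.card_pos.mpr ⟨j, hj⟩
  omega

lemma shiftE_recover {i j : ℕ} {e : Finset ℕ} (hj : j ∈ e) (hi : i ∉ e) :
    insert j ((shiftE i j e).erase i) = e := by
  rw [shiftE, Finset.erase_insert (fun h => hi (Finset.mem_of_mem_erase h)),
    Finset.insert_erase hj]

lemma shiftMap_cases (i j : ℕ) (F : Finset (Finset ℕ)) (e : Finset ℕ) :
    shiftMap i j F e = e ∨
      (j ∈ e ∧ i ∉ e ∧ shiftE i j e ∉ F ∧ shiftMap i j F e = shiftE i j e) := by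
  unfold shiftMap
  split_ifs with h
  · exact Or.inr ⟨h.1, h.2.1, h.2.2, rfl⟩
  · exact Or.inl rfl

lemma shiftMap_ne {i j : ℕ} (hij : i ≠ j) {F : Finset (Finset ℕ)} {e : Finset ℕ}
    (h : shiftMap i j F e ≠ e) :
    j ∈ e ∧ i ∉ e ∧ shiftE i j e ∉ F ∧ shiftMap i j F e = shiftE i j e := by
  rcases shiftMap_cases i j F e with h' | h'
  · exact absurd h' h
  · exact h'

lemma shiftMap_injOn {i j : ℕ} (hij : i ≠ j) (F : Finset (Finset ℕ)) :
    Set.InjOn (shiftMap i j F) F := by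
  intro a ha b hb hab
  rcases shiftMap_cases i j F a with h1 | ⟨hja, hia, hsa, h1⟩ <;>
    rcases shiftMap_cases i j F b with h2 | ⟨hjb, hib, hsb, h2⟩
  · rw [h1, h2] at hab; exact hab
  · rw [h1, h2] at hab
    exact absurd (hab ▸ ha) hsb
  · rw [h1, h2] at hab
    exact absurd (hab ▸ hb) hsa
  · rw [h1, h2] at hab
    rw [← shiftE_recover hja hia, ← shiftE_recover hjb hib, hab]

lemma card_shiftF {i j : ℕ} (hij : i ≠ j) (F : Finset (Finset ℕ)) :
    (shiftF i j F).card = F.card :=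
  Finset.card_image_of_injOn (shiftMap_injOn hij F)

lemma shiftF_edges {n k i j : ℕ} (hi : i ∈ Finset.Icc 1 n) (hij : i ≠ j)
    {F : Finset (Finset ℕ)} (hF : ∀ e ∈ F, e ⊆ Finset.Icc 1 n ∧ e.card = k) :
    ∀ e ∈ shiftF i j F, e ⊆ Finset.Icc 1 n ∧ e.card = k := by
  intro f hf
  obtain ⟨e, he, rfl⟩ := Finset.mem_image.mp hf
  rcases shiftMap_cases i j F e with h | ⟨hj', hi', _, h⟩
  · rw [h]; exact hF e he
  · rw [h]
    obtain ⟨hsub, hcard⟩ := hF e he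
    constructor
    · rw [shiftE]
      intro x hx
      rcases Finset.mem_insert.mp hx with rfl | hx
      · exact hi
      · exact hsub (Finset.mem_of_mem_erase hx)
    · rw [card_shiftE hj' hi', hcard]

lemma hasU_shiftF {i j s q : ℕ} (hij : i ≠ j) {F : Finset (Finset ℕ)}
    (hU : HasU F s q) : HasU (shiftF i j F) s q := by
  intro f hf
  have hpre : ∀ t, ∃ e ∈ F, shiftMap i j F e = f t := fun t =>
    Finset.mem_image.mp (hf t)
  choose e he hef using hpre
  set U := Finset.univ.biUnion f with hU'
  have mem_e : ∀ t, ∀ x ∈ f t, x ≠ i → x ∈ e t := by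
    intro t x hx hxi
    rcases shiftMap_cases i j F (e t) with h | ⟨hj', hi', _, h⟩
    · have hfe : f t = e t := by rw [← hef t, h]
      rwa [hfe] at hx
    · rw [← hef t, h, shiftE] at hx
      rcases Finset.mem_insert.mp hx with rfl | hx
      · exact absurd rfl hxi
      · exact Finset.mem_of_mem_erase hx
  by_cases hall : ∀ t, f t = e t
  · have : U ⊆ Finset.univ.biUnion e := by
      intro x hx
      obtain ⟨t, _, hxt⟩ := Finset.mem_biUnion.mp hx
      exact Finset.mem_biUnion.mpr ⟨t, Finset.mem_univ t, (hall t) ▸ hxt⟩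
    exact le_trans (Finset.card_le_card this) (hU e he)
  · push_neg at hall
    obtain ⟨t₀, ht₀⟩ := hall
    have hc₀ := shiftMap_ne hij (fun h => ht₀ ((hef t₀ ▸ h).symm ▸ rfl))
    -- hc₀ : j ∈ e t₀ ∧ i ∉ e t₀ ∧ shiftE i j (e t₀) ∉ F ∧ shiftMap .. = shiftE ..
    have hft₀ : f t₀ = shiftE i j (e t₀) := by rw [← hef t₀, hc₀.2.2.2]
    have hiU : i ∈ U := by
      refine Finset.mem_biUnion.mpr ⟨t₀, Finset.mem_univ _, ?_⟩
      rw [hft₀, shiftE]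
      exact Finset.mem_insert_self i _
    have hfj : ∀ t, j ∈ f t → f t = e t := by
      intro t hjt
      rcases shiftMap_cases i j F (e t) with h | ⟨hj', hi', _, h⟩
      · rw [← hef t, h]
      · exact absurd (by rwa [← hef t, h] at hjt) (j_notMem_shiftE hij (e t))
    by_cases hjU : j ∈ U
    · obtain ⟨t₁, _, hjt₁⟩ := Finset.mem_biUnion.mp hjU
      have hft₁ : f t₁ = e t₁ := hfj t₁ hjt₁
      have ht01 : t₀ ≠ t₁ := by
        intro h
        rw [h, hft₁] at ht₀
        exact ht₀ rfl
      by_cases hie : i ∈ e t₁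
      · have : U ⊆ Finset.univ.biUnion e := by
          intro x hx
          obtain ⟨t, _, hxt⟩ := Finset.mem_biUnion.mp hx
          by_cases hxi : x = i
          · exact Finset.mem_biUnion.mpr ⟨t₁, Finset.mem_univ _, hxi ▸ hie⟩
          · exact Finset.mem_biUnion.mpr ⟨t, Finset.mem_univ _, mem_e t x hxt hxi⟩
        exact le_trans (Finset.card_le_card this) (hU e he)
      · have hjt₁' : j ∈ e t₁ := hft₁ ▸ hjt₁
        have hsh : shiftE i j (e t₁) ∈ F := by
          by_contra hns
          have hcond : shiftMap i j F (e t₁) = shiftE i j (e t₁) := by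
            unfold shiftMap
            rw [if_pos ⟨hjt₁', hie, hns⟩]
          have heq : e t₁ = shiftE i j (e t₁) := by
            rw [← hcond, hef t₁]
            exact hft₁.symm
          exact j_notMem_shiftE hij (e t₁) (heq ▸ hjt₁')
        set g : Fin s → Finset ℕ := fun t => if t = t₁ then shiftE i j (e t₁) else e t
          with hg
        have hgF : ∀ t, g t ∈ F := by
          intro t
          rw [hg]
          dsimp only
          split_ifs
          · exact hsh
          · exact he t
        have hsub : U ⊆ Finset.univ.biUnion g := by
          intro x hx
          obtain ⟨t, _, hxt⟩ := Finset.mem_biUnion.mp hx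
          by_cases hxi : x = i
          · subst hxi
            refine Finset.mem_biUnion.mpr ⟨t₁, Finset.mem_univ _, ?_⟩
            simp only [hg, if_pos rfl, shiftE]
            exact Finset.mem_insert_self _ _
          · by_cases hxj : x = j
            · refine Finset.mem_biUnion.mpr ⟨t₀, Finset.mem_univ _, ?_⟩
              rw [hg]
              simp only [if_neg ht01]
              exact hxj ▸ hc₀.1
            · have hxe : x ∈ e t := mem_e t x hxt hxi
              refine Finset.mem_biUnion.mpr ⟨t, Finset.mem_univ _, ?_⟩
              rw [hg]
              dsimp only
              split_ifs with ht
              · rw [shiftE]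
                exact Finset.mem_insert_of_mem (Finset.mem_erase.mpr ⟨hxj, ht ▸ hxe⟩)
              · exact hxe
        exact le_trans (Finset.card_le_card hsub) (hU g hgF)
    · -- j ∉ U
      have hjE : j ∈ Finset.univ.biUnion e :=
        Finset.mem_biUnion.mpr ⟨t₀, Finset.mem_univ _, hc₀.1⟩
      have hsub : insert j (U.erase i) ⊆ Finset.univ.biUnion e := by
        intro x hx
        rcases Finset.mem_insert.mp hx with rfl | hx
        · exact hjE
        · obtain ⟨t, _, hxt⟩ := Finset.mem_biUnion.mp (Finset.mem_of_mem_erase hx)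
          exact Finset.mem_biUnion.mpr
            ⟨t, Finset.mem_univ _, mem_e t x hxt (Finset.ne_of_mem_erase hx)⟩
      have hcard : U.card = (insert j (U.erase i)).card := by
        rw [Finset.card_insert_of_notMem (fun h => hjU (Finset.mem_of_mem_erase h)),
          Finset.card_erase_of_mem hiU]
        have : 1 ≤ U.card := Finset.card_pos.mpr ⟨i, hiU⟩
        omega
      rw [hcard]
      exact le_trans (Finset.card_le_card hsub) (hU e he)

def Phi (F : Finset (Finset ℕ)) : ℕ := ∑ e ∈ F, ∑ x ∈ e, x

lemma sum_shiftMap_le {i j : ℕ} (hij : i < j) (F : Finset (Finset ℕ)) (e : Finset ℕ) :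
    ∑ x ∈ shiftMap i j F e, x ≤ ∑ x ∈ e, x := by
  rcases shiftMap_cases i j F e with h | ⟨hj', hi', _, h⟩
  · rw [h]
  · rw [h, shiftE, Finset.sum_insert (fun hx => hi' (Finset.mem_of_mem_erase hx))]
    have h2 := Finset.add_sum_erase e (fun x => x) hj'
    omega

lemma sum_shiftMap_lt {i j : ℕ} (hij : i < j) {F : Finset (Finset ℕ)} {e : Finset ℕ}
    (hne : shiftMap i j F e ≠ e) : ∑ x ∈ shiftMap i j F e, x < ∑ x ∈ e, x := by
  obtain ⟨hj', hi', _, h⟩ := shiftMap_ne (Nat.ne_of_lt hij) hne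
  rw [h, shiftE, Finset.sum_insert (fun hx => hi' (Finset.mem_of_mem_erase hx))]
  have h2 := Finset.add_sum_erase e (fun x => x) hj'
  omega

lemma phi_shiftF_lt {i j : ℕ} (hij : i < j) {F : Finset (Finset ℕ)}
    (hne : shiftF i j F ≠ F) : Phi (shiftF i j F) < Phi F := by
  have hne' : i ≠ j := Nat.ne_of_lt hij
  have hsum : Phi (shiftF i j F) = ∑ e ∈ F, ∑ x ∈ shiftMap i j F e, x :=
    Finset.sum_image fun x hx y hy h => shiftMap_injOn hne' F hx hy h
  rw [hsum, Phi]
  have hex : ∃ e ∈ F, shiftMap i j F e ≠ e := by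
    by_contra hc
    push_neg at hc
    exact hne (by rw [shiftF, Finset.image_congr (fun e he => hc e he)]; exact Finset.image_id)
  obtain ⟨e₀, he₀, hne₀⟩ := hex
  exact Finset.sum_lt_sum (fun e _ => sum_shiftMap_le hij F e)
    ⟨e₀, he₀, sum_shiftMap_lt hij hne₀⟩

lemma precS_shiftE {A B : Finset ℕ} {a b t : ℕ} (hAB : PrecS A B)
    (htA : t < A.card) (htB : t < B.card)
    (ha : (A.sort (· ≤ ·)).getD t 0 = a) (hb : (B.sort (· ≤ ·)).getD t 0 = b)
    (hab : a < b) (haB : a ∉ B) (hbB : b ∈ B) :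
    PrecS A (shiftE a b B) := by
  have hcnt := (precS_iff A B).mp hAB
  rw [precS_iff]
  have hcard : (shiftE a b B).card = B.card := card_shiftE hbB haB
  refine ⟨hcnt.1.trans hcard.symm, fun m => ?_⟩
  by_cases ham : a ≤ m
  · by_cases hbm : b ≤ m
    · -- both ≤ m : B' filter = insert a ((B.filter).erase b)
      have hfe : (shiftE a b B).filter (· ≤ m) =
          insert a ((B.filter (· ≤ m)).erase b) := by
        ext x
        simp only [shiftE, Finset.mem_filter, Finset.mem_insert, Finset.mem_erase]
        constructor
        · rintro ⟨(rfl | ⟨hxb, hxB⟩), hxm⟩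
          · exact Or.inl rfl
          · exact Or.inr ⟨hxb, hxB, hxm⟩
        · rintro (rfl | ⟨hxb, hxB, hxm⟩)
          · exact ⟨Or.inl rfl, ham⟩
          · exact ⟨Or.inr ⟨hxb, hxB⟩, hxm⟩
      rw [hfe]
      have hbf : b ∈ B.filter (· ≤ m) := Finset.mem_filter.mpr ⟨hbB, hbm⟩
      have haf : a ∉ (B.filter (· ≤ m)).erase b :=
        fun h => haB (Finset.mem_filter.mp (Finset.mem_of_mem_erase h)).1
      rw [Finset.card_insert_of_notMem haf, Finset.card_erase_of_mem hbf]
      have h1 : 1 ≤ (B.filter (· ≤ m)).card := Finset.card_pos.mpr ⟨b, hbf⟩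
      have := hcnt.2 m
      omega
    · -- a ≤ m < b
      have hsub : (shiftE a b B).filter (· ≤ m) ⊆ insert a (B.filter (· ≤ m)) := by
        intro x hx
        simp only [shiftE, Finset.mem_filter, Finset.mem_insert] at hx ⊢
        rcases hx with ⟨rfl | hxB, hxm⟩
        · exact Or.inl rfl
        · exact Or.inr ⟨Finset.mem_of_mem_erase hxB, hxm⟩
      have hle : ((shiftE a b B).filter (· ≤ m)).card ≤ (B.filter (· ≤ m)).card + 1 :=
        le_trans (Finset.card_le_card hsub) (Finset.card_insert_le _ _)
      have htAc : t < (A.filter (· ≤ m)).card :=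
        (countL A htA m).mp (ha ▸ ham)
      have htBc : (B.filter (· ≤ m)).card ≤ t := by
        by_contra hc
        push_neg at hc
        exact hbm ((hb ▸ (countL B htB m).mpr hc))
      omega
  · -- m < a < b : filters equal
    have hfe : (shiftE a b B).filter (· ≤ m) = B.filter (· ≤ m) := by
      ext x
      simp only [shiftE, Finset.mem_filter, Finset.mem_insert]
      constructor
      · rintro ⟨(rfl | hxB), hxm⟩
        · exact absurd hxm ham
        · exact ⟨Finset.mem_of_mem_erase hxB, hxm⟩
      · rintro ⟨hxB, hxm⟩
        refine ⟨Or.inr (Finset.mem_erase.mpr ⟨?_, hxB⟩), hxm⟩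
        rintro rfl
        omega
    rw [hfe]
    exact hcnt.2 m

lemma stable_of_fixed {n : ℕ} {F : Finset (Finset ℕ)}
    (hF : ∀ e ∈ F, e ⊆ Finset.Icc 1 n)
    (hfix : ∀ i j, 1 ≤ i → i < j → j ≤ n → shiftF i j F = F) :
    IsStable n F := by
  have hcl : ∀ a b, 1 ≤ a → a < b → b ≤ n → ∀ B ∈ F, b ∈ B → a ∉ B →
      shiftE a b B ∈ F := by
    intro a b h1 h2 h3 B hB hbB haB
    by_contra hns
    have hm : shiftMap a b F B = shiftE a b B := by
      unfold shiftMap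
      rw [if_pos ⟨hbB, haB, hns⟩]
    have : shiftE a b B ∈ shiftF a b F := hm ▸ Finset.mem_image_of_mem _ hB
    rw [hfix a b h1 h2 h3] at this
    exact hns this
  suffices H : ∀ N, ∀ B, B ∈ F → (∑ x ∈ B, x) = N →
      ∀ A, A ⊆ Finset.Icc 1 n → PrecS A B → A ∈ F by
    intro A B hA hB hAB
    exact H _ B hB rfl A hA hAB
  intro N
  induction N using Nat.strong_induction_on with
  | _ N ih =>
    intro B hB hsum A hA hAB
    by_cases hABeq : A = B
    · exact hABeq ▸ hB
    · have hc : A.card = B.card := hAB.1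
      -- there is an index where the sorted lists differ
      have hP : ∃ t, t < A.card ∧
          (A.sort (· ≤ ·)).getD t 0 ≠ (B.sort (· ≤ ·)).getD t 0 := by
        by_contra hcon
        push_neg at hcon
        apply hABeq
        have hlen : (A.sort (· ≤ ·)).length = (B.sort (· ≤ ·)).length := by
          rw [Finset.length_sort, Finset.length_sort, hc]
        have hlists : A.sort (· ≤ ·) = B.sort (· ≤ ·) := by
          apply List.ext_getElem hlen
          intro t h1 h2
          have ht : t < A.card := by rwa [Finset.length_sort] at h1
          have := hcon t ht
          rwa [List.getD_eq_getElem _ _ h1, List.getD_eq_getElem _ _ h2] at this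
        have : (A.sort (· ≤ ·)).toFinset = (B.sort (· ≤ ·)).toFinset := by rw [hlists]
        rwa [Finset.sort_toFinset, Finset.sort_toFinset] at this
      classical
      set t := Nat.find hP with htdef
      obtain ⟨htA, htne⟩ := Nat.find_spec hP
      have hmin : ∀ r, r < t → r < A.card →
          (A.sort (· ≤ ·)).getD r 0 = (B.sort (· ≤ ·)).getD r 0 := by
        intro r hr hrA
        have := Nat.find_min hP hr
        push_neg at this
        exact this hrA
      set a := (A.sort (· ≤ ·)).getD t 0 with hadef
      set b := (B.sort (· ≤ ·)).getD t 0 with hbdef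
      have htB : t < B.card := hc ▸ htA
      have hab : a < b := lt_of_le_of_ne (hAB.2 t htA) htne
      have haA : a ∈ A := by
        rw [hadef, sort_getD_eq A htA]
        exact Finset.orderEmbOfFin_mem A rfl _
      have hbB : b ∈ B := by
        rw [hbdef, sort_getD_eq B htB]
        exact Finset.orderEmbOfFin_mem B rfl _
      have haB : a ∉ B := by
        intro haB'
        have : ∃ r : Fin B.card, B.orderEmbOfFin rfl r = a := by
          have : a ∈ Set.range (B.orderEmbOfFin rfl) := by
            rw [Finset.range_orderEmbOfFin]
            exact haB'
          exact this
        obtain ⟨r, hr⟩ := this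
        have hrb : (B.orderEmbOfFin rfl) r < (B.orderEmbOfFin rfl) ⟨t, htB⟩ := by
          rw [hr, ← sort_getD_eq B htB, ← hbdef]
          exact hab
        have hrt : (r : ℕ) < t := by
          have := (OrderEmbedding.lt_iff_lt _).mp hrb
          exact this
        have hrA : (r : ℕ) < A.card := lt_trans hrt htA
        have hrB : (r : ℕ) < B.card := r.2
        have h1 : (A.sort (· ≤ ·)).getD r 0 = a := by
          rw [hmin r hrt hrA, sort_getD_eq B hrB]
          rw [show (⟨(r : ℕ), hrB⟩ : Fin B.card) = r from Fin.eta r hrB]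
          exact hr
        have h2 : (A.sort (· ≤ ·)).getD r 0 < a := by
          conv_rhs => rw [hadef, sort_getD_eq A htA]
          rw [sort_getD_eq A hrA]
          exact (A.orderEmbOfFin rfl).strictMono
            (show (⟨(r : ℕ), hrA⟩ : Fin A.card) < ⟨t, htA⟩ from hrt)
        omega
      have h1a : 1 ≤ a := (Finset.mem_Icc.mp (hA haA)).1
      have hbn : b ≤ n := (Finset.mem_Icc.mp (hF B hB hbB)).2
      have hB' : shiftE a b B ∈ F := hcl a b h1a hab hbn B hB hbB haB
      have hAB' : PrecS A (shiftE a b B) :=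
        precS_shiftE hAB htA htB hadef.symm hbdef.symm hab haB hbB
      have hsum' : ∑ x ∈ shiftE a b B, x < N := by
        rw [← hsum, shiftE,
          Finset.sum_insert (fun hx => haB (Finset.mem_of_mem_erase hx))]
        have h2 := Finset.add_sum_erase B (fun x => x) hbB
        omega
      exact ih _ hsum' (shiftE a b B) hB' rfl A hA hAB' 

theorem exists_stable_of_U' (n k s q : ℕ) (F : Finset (Finset ℕ))
    (hF : ∀ e ∈ F, e ⊆ Finset.Icc 1 n ∧ e.card = k)
    (hU : HasU F s q) :
    ∃ F' : Finset (Finset ℕ),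
      (∀ e ∈ F', e ⊆ Finset.Icc 1 n ∧ e.card = k) ∧
      IsStable n F' ∧ HasU F' s q ∧ F'.card = F.card := by
  suffices H : ∀ N (F : Finset (Finset ℕ)), Phi F = N →
      (∀ e ∈ F, e ⊆ Finset.Icc 1 n ∧ e.card = k) → HasU F s q →
      ∃ F', (∀ e ∈ F', e ⊆ Finset.Icc 1 n ∧ e.card = k) ∧ IsStable n F' ∧
        HasU F' s q ∧ F'.card = F.card from H (Phi F) F rfl hF hU
  intro N
  induction N using Nat.strong_induction_on with
  | _ N ih =>
    intro F hPhi hF hU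
    by_cases hfix : ∀ i j, 1 ≤ i → i < j → j ≤ n → shiftF i j F = F
    · exact ⟨F, hF, stable_of_fixed (fun e he => (hF e he).1) hfix, hU, rfl⟩
    · push_neg at hfix
      obtain ⟨i, j, h1, h2, h3, hne⟩ := hfix
      have hlt : Phi (shiftF i j F) < N := hPhi ▸ phi_shiftF_lt h2 hne
      have hiIcc : i ∈ Finset.Icc 1 n := Finset.mem_Icc.mpr ⟨h1, by omega⟩
      obtain ⟨F', hE', hS', hU', hC'⟩ := ih _ hlt (shiftF i j F) rfl
        (shiftF_edges hiIcc (Nat.ne_of_lt h2) hF) (hasU_shiftF (Nat.ne_of_lt h2) hU)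
      exact ⟨F', hE', hS', hU', hC'.trans (card_shiftF (Nat.ne_of_lt h2) F)⟩

/-- Lemma 2.3 (Frankl): shifting preserves property U(s,q) and the size of the family. -/
theorem exists_stable_of_U (n k s q : ℕ) (hs : 2 ≤ s) (hk : 2 ≤ k) (hkq : k ≤ q)
    (hq : q < s * k) (F : Finset (Finset ℕ))
    (hF : ∀ e ∈ F, e ⊆ Finset.Icc 1 n ∧ e.card = k)
    (hU : HasU F s q) :
    ∃ F' : Finset (Finset ℕ),
      (∀ e ∈ F', e ⊆ Finset.Icc 1 n ∧ e.card = k) ∧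
      IsStable n F' ∧ HasU F' s q ∧ F'.card = F.card := by
  exact exists_stable_of_U' n k s q F hF hU
end

section
/- Let n ≥ 7 be an integer. If F is a 3-graph on [n] with property U(2, 5), then |F| ≤ max{ C(n−1, 2), (n−3)·C(3, 2) + C(3, 3), C(5, 3) }. -/
open Finset

/-- Lemma 3.1: the case s = 2. -/
theorem s_eq_two (n : ℕ) (hn : 7 ≤ n) (F : Finset (Finset ℕ))
    (hF : ∀ e ∈ F, e ⊆ Finset.Icc 1 n ∧ e.card = 3)
    (hU : HasU F 2 5) :
    F.card ≤ max (Nat.choose (n - 1) 2)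
      (max ((n - 3) * Nat.choose 3 2 + Nat.choose 3 3) (Nat.choose 5 3)) := by
  have hn0 : 0 < n := by omega
  set φ : ℕ → Fin n := fun x => ⟨(x - 1) % n, Nat.mod_lt _ hn0⟩ with hφ
  have hφinj : ∀ x ∈ Finset.Icc 1 n, ∀ y ∈ Finset.Icc 1 n, φ x = φ y → x = y := by
    intro x hx y hy h
    simp only [Finset.mem_Icc] at hx hy
    have hx' : (x - 1) % n = x - 1 := Nat.mod_eq_of_lt (by omega)
    have hy' : (y - 1) % n = y - 1 := Nat.mod_eq_of_lt (by omega)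
    have := congrArg Fin.val h
    simp only [hφ, hx', hy'] at this
    omega
  -- two edges always intersect
  have hint : ∀ e₁ ∈ F, ∀ e₂ ∈ F, ¬ Disjoint e₁ e₂ := by
    intro e₁ he₁ e₂ he₂ hd
    have h5 := hU ![e₁, e₂] (by intro i; fin_cases i <;> simpa)
    have hb : (Finset.univ.biUnion ![e₁, e₂]) = e₁ ∪ e₂ := by
      ext x; simp [Fin.exists_fin_two]
    rw [hb, Finset.card_union_of_disjoint hd, (hF e₁ he₁).2, (hF e₂ he₂).2] at h5
    omega
  set G : Finset (Finset (Fin n)) := F.image (fun e => e.image φ) with hG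
  have hcard : G.card = F.card := by
    rw [hG]
    apply Finset.card_image_of_injOn
    intro e₁ he₁ e₂ he₂ h
    have hs : ∀ a ∈ F, ∀ b ∈ F, a.image φ = b.image φ → a ⊆ b := by
      intro a ha b hb hab x hx
      have : φ x ∈ b.image φ := by rw [← hab]; exact Finset.mem_image_of_mem _ hx
      obtain ⟨y, hy, hxy⟩ := Finset.mem_image.1 this
      have := hφinj y ((hF b hb).1 hy) x ((hF a ha).1 hx) hxy
      rwa [← this]
    exact Finset.Subset.antisymm (hs e₁ he₁ e₂ he₂ h) (hs e₂ he₂ e₁ he₁ h.symm)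
  have hGint : (G : Set (Finset (Fin n))).Intersecting := by
    intro A hA B hB hd
    simp only [hG, Finset.coe_image, Set.mem_image, Finset.mem_coe] at hA hB
    obtain ⟨e₁, he₁, rfl⟩ := hA
    obtain ⟨e₂, he₂, rfl⟩ := hB
    refine hint e₁ he₁ e₂ he₂ ?_
    rw [Finset.disjoint_left] at hd ⊢
    intro x hx₁ hx₂
    exact hd (Finset.mem_image_of_mem _ hx₁) (Finset.mem_image_of_mem _ hx₂)
  have hGsized : (G : Set (Finset (Fin n))).Sized 3 := by
    intro A hA
    simp only [hG, Finset.coe_image, Set.mem_image, Finset.mem_coe] at hA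
    obtain ⟨e, he, rfl⟩ := hA
    rw [Finset.card_image_of_injOn fun x hx y hy =>
      hφinj x ((hF e he).1 hx) y ((hF e he).1 hy)]
    exact (hF e he).2
  have h3 : 3 ≤ n / 2 := by omega
  have := Finset.erdos_ko_rado hGint hGsized h3
  rw [hcard] at this
  calc F.card ≤ (n - 1).choose 2 := by simpa using this
    _ ≤ _ := le_max_left _ _
end

section
/- Let n and s be integers with s ≥ 3 and n ≥ 2s + 4. Let F be a stable 3-graph with vertex set [n]. If F has property U(s, 2s+1), ν(F) ≥ 2, and ν(∂F) ≥ s + 2, then |F| ≤ max{ C(n−1, 2), (n−s−1)·C(s+1, 2) + C(s+1, 3), C(2s+1, 3) }. -/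
open Finset

/-! A maximum matching of the shadow and stability force the fan edges `{1, j, 2s + 5 - j}`,
`2 ≤ j ≤ s + 2`, into `F`: if one is missing, every shadow pair meets `[1, j - 1]` or lies in
`[j, 2s + 4 - j]`, so a matching of the shadow has at most `(j - 1) + (s + 2 - j)` pairs.
As `ν(F) ≥ 2`, also `{2, 3, 4} ∈ F`. Property `U(s, 2s + 1)` then excludes `{2, s + 2, s + 3}`,
`{2, 3, 2s + 2}` and `{1, s + 3, 2s + 2}`: each would complete, with fan edges (and, for the last,
with its shift `{1, s + 2, 2s + 1}` and `{2, 3, 4}`), a set of `s` edges covering `[2s + 2]`.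
By stability every edge of `F` is then of one of four explicit shapes, and counting them gives at
most `(n - s - 1) C(s + 1, 2) + C(s + 1, 3)` edges. -/

lemma sort_triple {x y z : ℕ} (hxy : x < y) (hyz : y < z) :
    ({x, y, z} : Finset ℕ).sort (· ≤ ·) = [x, y, z] := by
  have hlt : [x, y, z].Pairwise (· < ·) := by simp [hxy, hyz, hxy.trans hyz]
  simpa using (List.toFinset_sort (· ≤ ·) hlt.nodup).2 (hlt.imp le_of_lt)

lemma exists_eq_triple_of_card_eq_three {e : Finset ℕ} (he : e.card = 3) :
    ∃ x y z, x < y ∧ y < z ∧ e = {x, y, z} := by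
  obtain ⟨x, y, z, hl⟩ := List.length_eq_three.1 (by simpa using he : (e.sort (· ≤ ·)).length = 3)
  have hlt := (e.sortedLT_sort).pairwise
  rw [hl] at hlt
  refine ⟨x, y, z, by simp_all, by simp_all, ?_⟩
  simpa [hl] using (e.sort_toFinset (· ≤ ·)).symm

lemma precS_triple {u v w x y z : ℕ} (huv : u < v) (hvw : v < w) (hxy : x < y) (hyz : y < z)
    (hux : u ≤ x) (hvy : v ≤ y) (hwz : w ≤ z) : PrecS {u, v, w} {x, y, z} := by
  have hcard (a b c : ℕ) (hab : a < b) (hbc : b < c) : ({a, b, c} : Finset ℕ).card = 3 := by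
    simpa [sort_triple hab hbc] using (length_sort (s := {a, b, c}) (· ≤ ·)).symm
  refine ⟨by rw [hcard _ _ _ huv hvw, hcard _ _ _ hxy hyz], fun i hi => ?_⟩
  rw [hcard _ _ _ huv hvw] at hi
  rw [sort_triple huv hvw, sort_triple hxy hyz]
  interval_cases i <;> simpa

lemma IsStable.triple_mem {n : ℕ} {F : Finset (Finset ℕ)} (hst : IsStable n F)
    {u v w x y z : ℕ} (he : {x, y, z} ∈ F) (huv : u < v) (hvw : v < w) (hxy : x < y)
    (hyz : y < z) (hu : 1 ≤ u) (hux : u ≤ x) (hvy : v ≤ y) (hwz : w ≤ z) (hzn : z ≤ n) :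
    {u, v, w} ∈ F := by
  refine hst _ _ (fun a ha => ?_) he (precS_triple huv hvw hxy hyz hux hvy hwz)
  simp only [mem_insert, mem_singleton] at ha
  rw [mem_Icc]
  omega

lemma exists_pairwiseDisjoint_of_le_matchNum {F : Finset (Finset ℕ)} {k : ℕ} (hk : 0 < k)
    (h : k ≤ matchNum F) :
    ∃ M ⊆ F, (M : Set (Finset ℕ)).PairwiseDisjoint id ∧ k ≤ M.card := by
  obtain ⟨M, hM, hkM⟩ := (Finset.le_sup_iff hk).1 h
  rw [mem_filter, mem_powerset] at hM
  exact ⟨M, hM.1, hM.2, hkM⟩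

lemma card_le_card_of_pairwiseDisjoint_of_exists_mem {α : Type*} {M : Finset (Finset α)}
    {S : Finset α} (hM : (M : Set (Finset α)).PairwiseDisjoint id)
    (hS : ∀ p ∈ M, ∃ a ∈ p, a ∈ S) : M.card ≤ S.card :=
  card_le_card_of_forall_subsingleton (fun p a => a ∈ p)
    (fun p hp => (hS p hp).imp fun _ ha => ⟨ha.2, ha.1⟩)
    (fun a _ _ hp _ hq => hM.elim hp.1 hq.1 (not_disjoint_iff.2 ⟨a, hp.2, hq.2⟩))

lemma mul_card_le_card_of_pairwiseDisjoint {α : Type*} [DecidableEq α] {M : Finset (Finset α)}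
    {T : Finset α} {k : ℕ} (hM : (M : Set (Finset α)).PairwiseDisjoint id)
    (hk : ∀ p ∈ M, p.card = k) (hT : ∀ p ∈ M, p ⊆ T) : k * M.card ≤ T.card := by
  calc k * M.card = (M.biUnion id).card := by
        rw [card_biUnion hM, sum_congr rfl fun p hp => (hk p hp : (id p).card = k), sum_const,
          smul_eq_mul, mul_comm]
    _ ≤ T.card := card_le_card (biUnion_subset.2 hT)

lemma mem_shadow2 {F : Finset (Finset ℕ)} {p : Finset ℕ} :
    p ∈ shadow2 F ↔ ∃ e ∈ F, p ⊆ e ∧ p.card = 2 := by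
  simp [shadow2]

-- The pairs `{j, 2s + 5 - j}`, `2 ≤ j ≤ s + 2`, partition `[2, 2s + 3]`.
def fanEdge (s j : ℕ) : Finset ℕ := {1, j, 2 * s + 5 - j}

section Stable

variable {n : ℕ} {F : Finset (Finset ℕ)}

lemma exists_eq_triple_of_mem (hF : ∀ e ∈ F, e ⊆ Icc 1 n ∧ e.card = 3) {e : Finset ℕ}
    (he : e ∈ F) : ∃ x y z, x < y ∧ y < z ∧ e = {x, y, z} ∧ 1 ≤ x ∧ z ≤ n := by
  obtain ⟨x, y, z, hxy, hyz, rfl⟩ := exists_eq_triple_of_card_eq_three (hF _ he).2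
  have hx := (hF _ he).1 (by simp : x ∈ _)
  have hz := (hF _ he).1 (by simp : z ∈ _)
  rw [mem_Icc] at hx hz
  exact ⟨x, y, z, hxy, hyz, rfl, hx.1, hz.2⟩

lemma exists_lt_or_subset_Ico_of_mem_shadow2 (hF : ∀ e ∈ F, e ⊆ Icc 1 n ∧ e.card = 3)
    (hst : IsStable n F) {b c : ℕ} (hb : 1 < b) (hbc : b < c) (hbad : {1, b, c} ∉ F)
    {p : Finset ℕ} (hp : p ∈ shadow2 F) : (∃ w ∈ p, w < b) ∨ p ⊆ Ico b c := by
  obtain ⟨e, he, hpe, hp2⟩ := mem_shadow2.1 hp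
  obtain ⟨u, w, huw, rfl⟩ := card_eq_two.1 hp2
  obtain ⟨x, y, z, hxy, hyz, rfl, hx, hzn⟩ := exists_eq_triple_of_mem hF he
  have hu : u = x ∨ u = y ∨ u = z := by simpa using hpe (by simp : u ∈ _)
  have hw : w = x ∨ w = y ∨ w = z := by simpa using hpe (by simp : w ∈ _)
  by_cases hlow : u < b ∨ w < b
  · left
    rcases hlow with h | h
    · exact ⟨u, by simp, h⟩
    · exact ⟨w, by simp, h⟩
  · right
    intro a ha
    simp only [mem_insert, mem_singleton] at ha
    rw [mem_Ico]
    by_contra hac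
    -- `{u, w} ⊆ {x, y, z}` gives `min u w ≤ y` and `max u w ≤ z`, so `{1, b, c} ≺ {x, y, z}`
    exact hbad (hst.triple_mem he hb hbc hxy hyz le_rfl hx (by omega) (by omega) hzn)

lemma fanEdge_mem {s : ℕ} (hF : ∀ e ∈ F, e ⊆ Icc 1 n ∧ e.card = 3) (hst : IsStable n F)
    (hnus : s + 2 ≤ matchNum (shadow2 F)) {j : ℕ} (hj : 2 ≤ j) (hjs : j ≤ s + 2) :
    fanEdge s j ∈ F := by
  by_contra hbad
  obtain ⟨M, hMF, hM, hMcard⟩ := exists_pairwiseDisjoint_of_le_matchNum (by omega) hnus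
  have hsplit (p) (hp : p ∈ M) := exists_lt_or_subset_Ico_of_mem_shadow2 hF hst
    (b := j) (c := 2 * s + 5 - j) (by omega) (by omega) hbad (hMF hp)
  have hpair {p} (hp : p ∈ M) : p ⊆ Icc 1 n ∧ p.card = 2 := by
    obtain ⟨e, he, hpe, hp2⟩ := mem_shadow2.1 (hMF hp)
    exact ⟨hpe.trans (hF e he).1, hp2⟩
  have hlow : (M.filter fun p => ∃ w ∈ p, w < j).card ≤ (Icc 1 (j - 1)).card := by
    refine card_le_card_of_pairwiseDisjoint_of_exists_mem (hM.subset (filter_subset _ _)) ?_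
    intro p hp
    obtain ⟨hpM, w, hw, hwj⟩ := mem_filter.1 hp
    have := mem_Icc.1 ((hpair hpM).1 hw)
    exact ⟨w, hw, mem_Icc.2 ⟨this.1, by omega⟩⟩
  have hhigh : 2 * (M.filter fun p => ¬ ∃ w ∈ p, w < j).card
      ≤ (Ico j (2 * s + 5 - j)).card := by
    refine mul_card_le_card_of_pairwiseDisjoint (hM.subset (filter_subset _ _))
      (fun p hp => (hpair (mem_filter.1 hp).1).2) fun p hp => ?_
    obtain ⟨hpM, hp⟩ := mem_filter.1 hp
    exact (hsplit p hpM).resolve_left hp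
  have := card_filter_add_card_filter_not (s := M) fun p => ∃ w ∈ p, w < j
  simp only [Nat.card_Icc, Nat.card_Ico] at hlow hhigh
  omega

lemma two_three_four_mem (hF : ∀ e ∈ F, e ⊆ Icc 1 n ∧ e.card = 3) (hst : IsStable n F)
    (hnu : 2 ≤ matchNum F) : ({2, 3, 4} : Finset ℕ) ∈ F := by
  obtain ⟨M, hMF, hM, hMcard⟩ := exists_pairwiseDisjoint_of_le_matchNum (by omega) hnu
  obtain ⟨A, hA, B, hB, hAB⟩ := one_lt_card.1 (by omega : 1 < M.card)
  obtain ⟨e, he, he1⟩ : ∃ e ∈ F, 1 ∉ e := by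
    by_cases h1A : 1 ∈ A
    · exact ⟨B, hMF hB, disjoint_left.1 (hM hA hB hAB) h1A⟩
    · exact ⟨A, hMF hA, h1A⟩
  obtain ⟨x, y, z, hxy, hyz, rfl, hx, hzn⟩ := exists_eq_triple_of_mem hF he
  have hx1 : x ≠ 1 := by rintro rfl; simp at he1
  exact hst.triple_mem he (by omega) (by omega) hxy hyz (by norm_num) (by omega) (by omega)
    (by omega) hzn

end Stable

lemma HasU.card_biUnion_le {F : Finset (Finset ℕ)} {s q : ℕ} (hU : HasU F s q)
    {G : Finset (Finset ℕ)} (hGF : G ⊆ F) (hG : G.Nonempty) (hGs : G.card ≤ s) :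
    (G.biUnion id).card ≤ q := by
  have : Nonempty G := hG.to_subtype
  let emb : G ↪ Fin s := G.equivFin.toEmbedding.trans (Fin.castLEEmb hGs)
  let f : Fin s → G := Function.invFun emb
  have hf : f.Surjective := Function.invFun_surjective emb.injective
  refine (card_le_card fun v hv => ?_).trans (hU (fun i => f i) fun i => hGF (f i).2)
  obtain ⟨e, he, hve⟩ := mem_biUnion.1 hv
  obtain ⟨i, hi⟩ := hf ⟨e, he⟩
  exact mem_biUnion.2 ⟨i, mem_univ _, by rwa [hi]⟩

lemma HasU.not_Icc_subset_biUnion {F : Finset (Finset ℕ)} {s q : ℕ} (hU : HasU F s q)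
    {G : Finset (Finset ℕ)} (hGF : G ⊆ F) (hGs : G.card ≤ s) :
    ¬ Icc 1 (q + 1) ⊆ G.biUnion id := by
  intro hcov
  have hG : G.Nonempty := by
    by_contra hG
    rw [not_nonempty_iff_eq_empty.1 hG, biUnion_empty, subset_empty] at hcov
    simp at hcov
  have := (card_le_card hcov).trans (hU.card_biUnion_le hGF hG hGs)
  simp at this

lemma mem_biUnion_image_fanEdge {s a b v : ℕ}
    (hv : v = 1 ∧ a ≤ b ∨ a ≤ v ∧ v ≤ b ∨ a + v ≤ 2 * s + 5 ∧ 2 * s + 5 ≤ b + v) :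
    v ∈ ((Icc a b).image (fanEdge s)).biUnion id := by
  simp only [mem_biUnion, mem_image, mem_Icc, id, fanEdge]
  rcases hv with ⟨rfl, hab⟩ | hv | hv
  · exact ⟨_, ⟨a, ⟨le_rfl, hab⟩, rfl⟩, by simp⟩
  · exact ⟨_, ⟨v, hv, rfl⟩, by simp⟩
  · exact ⟨_, ⟨2 * s + 5 - v, by omega, rfl⟩, by simp only [mem_insert, mem_singleton]; omega⟩

section Forbidden

variable {n s : ℕ} {F : Finset (Finset ℕ)}

lemma HasU.not_covers_with_fanEdges (hU : HasU F s (2 * s + 1))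
    (hF : ∀ e ∈ F, e ⊆ Icc 1 n ∧ e.card = 3) (hst : IsStable n F)
    (hnus : s + 2 ≤ matchNum (shadow2 F)) {E : Finset (Finset ℕ)} (hE : E ⊆ F) {a b : ℕ}
    (ha : 2 ≤ a) (hb : b ≤ s + 2) (hcard : E.card + (b + 1 - a) ≤ s) :
    ¬ ∀ v ∈ Icc 1 (2 * s + 2), v ∈ E.biUnion id ∨ v = 1 ∧ a ≤ b ∨ a ≤ v ∧ v ≤ b ∨
      a + v ≤ 2 * s + 5 ∧ 2 * s + 5 ≤ b + v := by
  intro hcov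
  refine hU.not_Icc_subset_biUnion (G := E ∪ (Icc a b).image (fanEdge s)) ?_ ?_ fun v hv => ?_
  · exact union_subset hE (image_subset_iff.2 fun j hj =>
      fanEdge_mem hF hst hnus (by rw [mem_Icc] at hj; omega) (by rw [mem_Icc] at hj; omega))
  · have := card_image_le (s := Icc a b) (f := fanEdge s)
    rw [Nat.card_Icc] at this
    exact (card_union_le _ _).trans (by omega)
  · rw [union_biUnion, mem_union]
    rcases hcov v hv with h | h
    · exact .inl h
    · exact .inr (mem_biUnion_image_fanEdge h)

lemma two_sAddTwo_sAddThree_notMem (hs : 2 ≤ s) (hU : HasU F s (2 * s + 1))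
    (hF : ∀ e ∈ F, e ⊆ Icc 1 n ∧ e.card = 3) (hst : IsStable n F)
    (hnus : s + 2 ≤ matchNum (shadow2 F)) : {2, s + 2, s + 3} ∉ F := fun hbad =>
  hU.not_covers_with_fanEdges hF hst hnus (E := {{2, s + 2, s + 3}}) (a := 3) (b := s + 1)
    (singleton_subset_iff.2 hbad) (by norm_num) (by omega) (by rw [card_singleton]; omega)
    fun v hv => by
      simp only [mem_Icc, singleton_biUnion, id_eq, mem_insert, mem_singleton] at hv ⊢; omega

lemma two_three_twoSAddTwo_notMem (hs : 2 ≤ s) (hU : HasU F s (2 * s + 1))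
    (hF : ∀ e ∈ F, e ⊆ Icc 1 n ∧ e.card = 3) (hst : IsStable n F)
    (hnus : s + 2 ≤ matchNum (shadow2 F)) : {2, 3, 2 * s + 2} ∉ F := fun hbad =>
  hU.not_covers_with_fanEdges hF hst hnus (E := {{2, 3, 2 * s + 2}}) (a := 4) (b := s + 2)
    (singleton_subset_iff.2 hbad) (by norm_num) le_rfl (by rw [card_singleton]; omega)
    fun v hv => by
      simp only [mem_Icc, singleton_biUnion, id_eq, mem_insert, mem_singleton] at hv ⊢; omega

lemma one_sAddThree_twoSAddTwo_notMem (hs : 3 ≤ s) (hU : HasU F s (2 * s + 1))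
    (hF : ∀ e ∈ F, e ⊆ Icc 1 n ∧ e.card = 3) (hst : IsStable n F)
    (hnu : 2 ≤ matchNum F) (hnus : s + 2 ≤ matchNum (shadow2 F)) :
    {1, s + 3, 2 * s + 2} ∉ F := by
  intro hbad
  have hle := mem_Icc.1 ((hF _ hbad).1 (by simp : 2 * s + 2 ∈ _))
  have hshift : {1, s + 2, 2 * s + 1} ∈ F :=
    hst.triple_mem hbad (by omega) (by omega) (by omega) (by omega) le_rfl le_rfl (by omega)
      (by omega) hle.2
  refine hU.not_covers_with_fanEdges hF hst hnus
    (E := {{2, 3, 4}, {1, s + 3, 2 * s + 2}, {1, s + 2, 2 * s + 1}}) (a := 5) (b := s + 1)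
    ?_ (by norm_num) (by omega) ((Nat.add_le_add_right card_le_three _).trans (by omega))
    fun v hv => by
      simp only [mem_Icc, biUnion_insert, singleton_biUnion, id_eq, mem_union, mem_insert,
        mem_singleton] at hv ⊢
      omega
  simp only [insert_subset_iff, singleton_subset_iff]
  exact ⟨two_three_four_mem hF hst hnu, hbad, hshift⟩

end Forbidden

lemma pair_mem_powersetCard_Icc {l r a b : ℕ} (hl : l ≤ a) (hab : a < b) (hr : b ≤ r) :
    {a, b} ∈ (Icc l r).powersetCard 2 :=
  mem_powersetCard.2 ⟨fun v hv => by
    simp only [mem_insert, mem_singleton] at hv; rw [mem_Icc]; omega, card_pair hab.ne⟩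

section Count

variable {n s : ℕ} {F : Finset (Finset ℕ)}

lemma exists_eq_triple_of_mem_of_notMem (hs : 2 ≤ s) (hF : ∀ e ∈ F, e ⊆ Icc 1 n ∧ e.card = 3)
    (hst : IsStable n F) (h₁ : {2, s + 2, s + 3} ∉ F) (h₂ : {2, 3, 2 * s + 2} ∉ F)
    (h₃ : {1, s + 3, 2 * s + 2} ∉ F) {e : Finset ℕ} (he : e ∈ F) :
    ∃ x y z, e = {x, y, z} ∧ x < y ∧ y < z ∧ z ≤ n ∧
      (x = 1 ∧ y ≤ s + 2 ∨ x = 1 ∧ s + 3 ≤ y ∧ z ≤ 2 * s + 1 ∨ 2 ≤ x ∧ z ≤ s + 1 ∨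
        2 ≤ x ∧ y ≤ s + 1 ∧ s + 2 ≤ z ∧ z ≤ 2 * s + 1) := by
  obtain ⟨x, y, z, hxy, hyz, rfl, hx, hzn⟩ := exists_eq_triple_of_mem hF he
  have c₁ : ¬ (2 ≤ x ∧ s + 2 ≤ y) := fun h => h₁ <|
    hst.triple_mem he (by omega) (by omega) hxy hyz (by norm_num) h.1 h.2 (by omega) hzn
  have c₂ : ¬ (2 ≤ x ∧ 2 * s + 2 ≤ z) := fun h => h₂ <|
    hst.triple_mem he (by omega) (by omega) hxy hyz (by norm_num) h.1 (by omega) h.2 hzn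
  have c₃ : ¬ (s + 3 ≤ y ∧ 2 * s + 2 ≤ z) := fun h => h₃ <|
    hst.triple_mem he (by omega) (by omega) hxy hyz le_rfl hx h.1 h.2 hzn
  exact ⟨x, y, z, rfl, hxy, hyz, hzn, by omega⟩

lemma card_le_of_notMem (hs : 2 ≤ s) (hF : ∀ e ∈ F, e ⊆ Icc 1 n ∧ e.card = 3)
    (hst : IsStable n F) (h₁ : {2, s + 2, s + 3} ∉ F) (h₂ : {2, 3, 2 * s + 2} ∉ F)
    (h₃ : {1, s + 3, 2 * s + 2} ∉ F) :
    F.card ≤ (n - 1).choose 2 - (n - s - 2).choose 2 + (s - 1).choose 2 + s.choose 3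
      + s.choose 2 * s := by
  set A := ((Icc 2 n).powersetCard 2 \ (Icc (s + 3) n).powersetCard 2).image (insert 1)
  set B := ((Icc (s + 3) (2 * s + 1)).powersetCard 2).image (insert 1)
  set C := (Icc 2 (s + 1)).powersetCard 3
  set D := ((Icc 2 (s + 1)).powersetCard 2 ×ˢ Icc (s + 2) (2 * s + 1)).image
    fun q => insert q.2 q.1
  have hcover : F ⊆ A ∪ B ∪ C ∪ D := by
    intro e he
    obtain ⟨x, y, z, rfl, hxy, hyz, hzn, h⟩ :=
      exists_eq_triple_of_mem_of_notMem hs hF hst h₁ h₂ h₃ he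
    simp only [A, B, C, D, mem_union, mem_image, mem_sdiff, mem_product]
    rcases h with ⟨rfl, hy⟩ | ⟨rfl, hy, hz⟩ | ⟨hx, hz⟩ | ⟨hx, hy, hz, hz'⟩
    · refine .inl (.inl (.inl ⟨{y, z}, ⟨pair_mem_powersetCard_Icc (by omega) hyz hzn,
        fun h => ?_⟩, rfl⟩))
      have := mem_Icc.1 ((mem_powersetCard.1 h).1 (mem_insert_self y _))
      omega
    · exact .inl (.inl (.inr ⟨{y, z}, pair_mem_powersetCard_Icc hy hyz hz, rfl⟩))
    · refine .inl (.inr (mem_powersetCard.2 ⟨fun v hv => ?_, card_eq_three.2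
        ⟨x, y, z, by omega, by omega, by omega, rfl⟩⟩))
      simp only [mem_insert, mem_singleton] at hv
      rw [mem_Icc]
      omega
    · refine .inr ⟨({x, y}, z), ⟨pair_mem_powersetCard_Icc hx hxy hy, mem_Icc.2 ⟨hz, hz'⟩⟩, ?_⟩
      ext v
      simp only [mem_insert, mem_singleton]
      omega
  have hA : A.card ≤ (n - 1).choose 2 - (n - s - 2).choose 2 := by
    refine card_image_le.trans ?_
    rw [card_sdiff_of_subset (powersetCard_mono (Icc_subset_Icc (by omega) le_rfl)),
      card_powersetCard, card_powersetCard, Nat.card_Icc, Nat.card_Icc]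
    exact le_of_eq (by congr 2; omega)
  have hB : B.card ≤ (s - 1).choose 2 := by
    refine card_image_le.trans ?_
    rw [card_powersetCard, Nat.card_Icc]
    exact le_of_eq (by congr 1; omega)
  have hC : C.card = s.choose 3 := by simp [C]
  have hD : D.card ≤ s.choose 2 * s := by
    refine card_image_le.trans ?_
    rw [card_product, card_powersetCard, Nat.card_Icc, Nat.card_Icc]
    exact le_of_eq (by congr 2; omega)
  calc F.card ≤ (A ∪ B ∪ C ∪ D).card := card_le_card hcover
    _ ≤ A.card + B.card + C.card + D.card :=
      (card_union_le _ _).trans (Nat.add_le_add_right ((card_union_le _ _).trans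
        (Nat.add_le_add_right (card_union_le _ _) _)) _)
    _ ≤ _ := by omega

end Count

lemma choose_bound_le {n s : ℕ} (hs : 3 ≤ s) (hn : 2 * s + 4 ≤ n) :
    (n - 1).choose 2 - (n - s - 2).choose 2 + (s - 1).choose 2 + s.choose 3 + s.choose 2 * s
      ≤ (n - s - 1) * (s + 1).choose 2 + (s + 1).choose 3 := by
  obtain ⟨t, rfl⟩ : ∃ t, s = t + 1 := ⟨s - 1, by omega⟩
  obtain ⟨a, rfl⟩ : ∃ a, n = a + t + 3 := ⟨n - t - 3, by omega⟩
  have hle : a.choose 2 ≤ (a + t + 2).choose 2 := Nat.choose_le_choose 2 (by omega)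
  simp only [show a + t + 3 - 1 = a + t + 2 by omega, show a + t + 3 - (t + 1) - 2 = a by omega,
    show a + t + 3 - (t + 1) - 1 = a + 1 by omega, Nat.add_sub_cancel,
    show (t + 1 + 1).choose 3 = (t + 1).choose 2 + (t + 1).choose 3 from Nat.choose_succ_succ' _ 2]
  suffices h : (a + t + 2).choose 2 + t.choose 2 + (t + 1).choose 2 * (t + 1)
      ≤ (a + 1) * (t + 1 + 1).choose 2 + (t + 1).choose 2 + a.choose 2 by omega
  have ha : (t : ℚ) + 3 ≤ a := by exact_mod_cast (show t + 3 ≤ a by omega)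
  have ht : (2 : ℚ) ≤ t := by exact_mod_cast (show 2 ≤ t by omega)
  qify
  simp only [Nat.cast_choose_two]
  push_cast
  nlinarith [mul_nonneg (sub_nonneg.2 ha) (mul_nonneg (sub_nonneg.2 ht) (sub_nonneg.2 ht))]

/-- Lemma 3.2: the case nu(shadow F) ≥ s + 2. -/
theorem case_shadow_ge (n s : ℕ) (hs : 3 ≤ s) (hn : 2 * s + 4 ≤ n)
    (F : Finset (Finset ℕ))
    (hF : ∀ e ∈ F, e ⊆ Finset.Icc 1 n ∧ e.card = 3)
    (hst : IsStable n F)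
    (hU : HasU F s (2 * s + 1))
    (hnu : 2 ≤ matchNum F)
    (hnus : s + 2 ≤ matchNum (shadow2 F)) :
    F.card ≤ max (Nat.choose (n - 1) 2)
      (max ((n - s - 1) * Nat.choose (s + 1) 2 + Nat.choose (s + 1) 3)
        (Nat.choose (2 * s + 1) 3)) := by
  have h₁ := two_sAddTwo_sAddThree_notMem (by omega) hU hF hst hnus
  have h₂ := two_three_twoSAddTwo_notMem (by omega) hU hF hst hnus
  have h₃ := one_sAddThree_twoSAddTwo_notMem hs hU hF hst hnu hnus
  calc F.card
      ≤ (n - 1).choose 2 - (n - s - 2).choose 2 + (s - 1).choose 2 + s.choose 3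
          + s.choose 2 * s := card_le_of_notMem (by omega) hF hst h₁ h₂ h₃
    _ ≤ (n - s - 1) * (s + 1).choose 2 + (s + 1).choose 3 := choose_bound_le hs hn
    _ ≤ _ := le_max_of_le_right (le_max_left _ _)
end

section
/- Let n and s be integers with s ≥ 3 and n ≥ 2s + 2. Let F be a stable 3-graph with vertex set [n]. If F has property U(s, 2s+1) and ν(∂F) ≤ s, then |F| ≤ max{ C(n−1, 2), (n−s−1)·C(s+1, 2) + C(s+1, 3), C(2s+1, 3) }. -/
open Finset

/-! If `F` is stable and `ν(∂F) ≤ s`, then for some `p ≤ s` every edge `a < b < c` with `p < b`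
lies in `[2s + 1 - p]`: otherwise stability moves, for each `j ≤ s + 1`, an offending edge to one
containing `{j, 2s + 3 - j}`, and these `s + 1` pairs form a matching in `∂F`. Hence every edge either
lies in `[m]`, `m = 2s + 1 - p`, or consists of two vertices of `[p]` and one of `(m, n]`, so
`|F| ≤ C(p, 2) (n - m) + C(m, 3)`. This is linear in `n` with slope `C(p, 2) ≤ C(s + 1, 2)`, and a
polynomial inequality in `s, p` shows it is at most the weighted mean of `C(2s + 1, 3)` and
`(n - s - 1) C(s + 1, 2) + C(s + 1, 3)` with weights `C(s + 1, 2) - C(p, 2)` and `C(p, 2)`. -/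

theorem Nat.cast_choose_three {K : Type*} [Field K] [CharZero K] (a : ℕ) :
    (a.choose 3 : K) = a * (a - 1) * (a - 2) / 6 := by
  induction a with
  | zero => simp
  | succ a ih =>
    rw [Nat.choose_succ_succ', Nat.cast_add, ih, Nat.cast_choose_two]
    push_cast
    ring

theorem Nat.le_max_of_mul_le_add_mul {x a b c d : ℕ} (hd : 0 < d) (hcd : c ≤ d)
    (h : d * x ≤ (d - c) * a + c * b) : x ≤ max a b := by
  refine Nat.le_of_mul_le_mul_left ?_ hd
  calc d * x ≤ (d - c) * a + c * b := h
    _ ≤ (d - c) * max a b + c * max a b := by gcongr <;> simp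
    _ = d * max a b := by rw [← add_mul, Nat.sub_add_cancel hcd]

theorem Finset.exists_lt_lt_eq_of_card_eq_three {α : Type*} [LinearOrder α] {e : Finset α}
    (h : e.card = 3) : ∃ a b c, a < b ∧ b < c ∧ e = {a, b, c} := by
  set f := e.orderEmbOfFin h
  have h01 : f 0 < f 1 := f.strictMono (by decide)
  have h12 : f 1 < f 2 := f.strictMono (by decide)
  refine ⟨f 0, f 1, f 2, h01, h12, (eq_of_subset_of_card_le ?_ ?_).symm⟩
  · simp [insert_subset_iff, f]
  · rw [h, card_eq_three.mpr ⟨_, _, _, h01.ne, (h01.trans h12).ne, h12.ne, rfl⟩]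

theorem sort_triple_s6 {a b c : ℕ} (hab : a < b) (hbc : b < c) :
    ({a, b, c} : Finset ℕ).sort (· ≤ ·) = [a, b, c] := by
  rw [sort_insert, sort_insert, sort_singleton]
  all_goals simp
  all_goals omega

theorem card_triple {a b c : ℕ} (hab : a < b) (hbc : b < c) : ({a, b, c} : Finset ℕ).card = 3 :=
  card_eq_three.mpr ⟨a, b, c, hab.ne, (hab.trans hbc).ne, hbc.ne, rfl⟩

theorem precS_triple_s6 {a b c x y z : ℕ} (hab : a < b) (hbc : b < c) (hxy : x < y) (hyz : y < z)
    (hxa : x ≤ a) (hyb : y ≤ b) (hzc : z ≤ c) : PrecS {x, y, z} {a, b, c} := by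
  refine ⟨by rw [card_triple hxy hyz, card_triple hab hbc], fun i hi => ?_⟩
  rw [card_triple hxy hyz] at hi
  rw [sort_triple_s6 hxy hyz, sort_triple_s6 hab hbc]
  interval_cases i <;> assumption

theorem IsStable.triple_mem_s6 {n : ℕ} {F : Finset (Finset ℕ)} (hst : IsStable n F)
    {a b c x y z : ℕ} (hab : a < b) (hbc : b < c) (he : ({a, b, c} : Finset ℕ) ∈ F)
    (hxy : x < y) (hyz : y < z) (hx : 1 ≤ x) (hzn : z ≤ n)
    (hxa : x ≤ a) (hyb : y ≤ b) (hzc : z ≤ c) : ({x, y, z} : Finset ℕ) ∈ F := by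
  refine hst _ _ ?_ he (precS_triple_s6 hab hbc hxy hyz hxa hyb hzc)
  intro t ht
  simp only [mem_insert, mem_singleton] at ht
  simp only [mem_Icc]
  omega

theorem exists_triple_of_mem {n : ℕ} {F : Finset (Finset ℕ)}
    (hF : ∀ e ∈ F, e ⊆ Icc 1 n ∧ e.card = 3) {e : Finset ℕ} (he : e ∈ F) :
    ∃ a b c, 1 ≤ a ∧ a < b ∧ b < c ∧ c ≤ n ∧ e = {a, b, c} := by
  obtain ⟨hsub, hcard⟩ := hF e he
  obtain ⟨a, b, c, hab, hbc, rfl⟩ := exists_lt_lt_eq_of_card_eq_three hcard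
  have ha := mem_Icc.mp (hsub (by simp : a ∈ _))
  have hc := mem_Icc.mp (hsub (by simp : c ∈ _))
  exact ⟨a, b, c, ha.1, hab, hbc, hc.2, rfl⟩

theorem card_le_matchNum_s6 {G M : Finset (Finset ℕ)} (hMG : M ⊆ G)
    (hM : (M : Set (Finset ℕ)).Pairwise Disjoint) : M.card ≤ matchNum G :=
  le_sup (f := Finset.card) (mem_filter.mpr ⟨mem_powerset.mpr hMG, hM⟩)

theorem le_matchNum_shadow2 {F : Finset (Finset ℕ)} {k : ℕ}
    (hpairs : ∀ j ∈ Icc 1 k, ∃ f ∈ F, ({j, 2 * k + 1 - j} : Finset ℕ) ⊆ f) :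
    k ≤ matchNum (shadow2 F) := by
  set pair : ℕ → Finset ℕ := fun j => {j, 2 * k + 1 - j}
  have hinj : Set.InjOn pair (Icc 1 k) := by
    intro i hi j hj hij
    have : i ∈ pair j := hij ▸ mem_insert_self _ _
    simp only [coe_Icc, Set.mem_Icc] at hi hj
    simp only [pair, mem_insert, mem_singleton] at this
    omega
  calc k = ((Icc 1 k).image pair).card := by rw [card_image_of_injOn hinj, Nat.card_Icc]; omega
    _ ≤ matchNum (shadow2 F) := by
      refine card_le_matchNum_s6 ?_ ?_
      · intro P hP
        obtain ⟨j, hj, rfl⟩ := mem_image.mp hP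
        obtain ⟨f, hf, hjf⟩ := hpairs j hj
        rw [mem_Icc] at hj
        exact mem_biUnion.mpr ⟨f, hf, mem_powersetCard.mpr ⟨hjf, card_pair (by omega)⟩⟩
      · simp only [coe_image, Set.Pairwise, Set.mem_image, coe_Icc, Set.mem_Icc]
        rintro _ ⟨i, hi, rfl⟩ _ ⟨j, hj, rfl⟩ hij
        have hij : i ≠ j := fun h => hij (h ▸ rfl)
        simp only [pair, disjoint_insert_left, disjoint_insert_right, mem_insert,
          mem_singleton, disjoint_singleton]
        omega

theorem IsStable.exists_bound_of_matchNum_shadow2_le {n s : ℕ} {F : Finset (Finset ℕ)}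
    (hst : IsStable n F) (hs : 0 < s) (hF : ∀ e ∈ F, e ⊆ Icc 1 n ∧ e.card = 3)
    (hnus : matchNum (shadow2 F) ≤ s) :
    ∃ p ≤ s, ∀ a b c, a < b → b < c → ({a, b, c} : Finset ℕ) ∈ F → p < b →
      c ≤ 2 * s + 1 - p := by
  by_contra! hbad
  suffices s + 1 ≤ matchNum (shadow2 F) by omega
  refine le_matchNum_shadow2 fun j hj => ?_
  rw [mem_Icc] at hj
  obtain ⟨a, b, c, hab, hbc, he, hjb, hjc⟩ := hbad (j - 1) (by omega)
  have ha := mem_Icc.mp ((hF _ he).1 (by simp : a ∈ _))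
  have hc := mem_Icc.mp ((hF _ he).1 (by simp : c ∈ _))
  have hmax := max_choice j 2
  have hmem : ({1, max j 2, 2 * (s + 1) + 1 - j} : Finset ℕ) ∈ F := by
    refine hst.triple_mem_s6 hab hbc he ?_ ?_ le_rfl ?_ ?_ ?_ ?_ <;> omega
  refine ⟨_, hmem, ?_⟩
  intro t ht
  simp only [mem_insert, mem_singleton] at ht ⊢
  omega

theorem card_le_choose_mul_add_choose {n p m : ℕ} {F : Finset (Finset ℕ)}
    (hF : ∀ e ∈ F, e ⊆ Icc 1 n ∧ e.card = 3)
    (hbound : ∀ a b c, a < b → b < c → ({a, b, c} : Finset ℕ) ∈ F → p < b → c ≤ m) :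
    F.card ≤ p.choose 2 * (n - m) + m.choose 3 := by
  have hcover : F ⊆ ((Icc 1 p).powersetCard 2 ×ˢ Ioc m n).image (fun x => insert x.2 x.1)
      ∪ (Icc 1 m).powersetCard 3 := by
    intro e he
    obtain ⟨a, b, c, ha, hab, hbc, hcn, rfl⟩ := exists_triple_of_mem hF he
    rw [mem_union, mem_image, mem_powersetCard]
    by_cases hcm : c ≤ m
    · refine Or.inr ⟨fun t ht => ?_, card_triple hab hbc⟩
      simp only [mem_insert, mem_singleton] at ht
      simp only [mem_Icc]
      omega
    · have hbp : b ≤ p := by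
        by_contra! hpb
        exact hcm (hbound a b c hab hbc he hpb)
      refine Or.inl ⟨({a, b}, c), ?_, ?_⟩
      · simp only [mem_product, mem_powersetCard, mem_Ioc]
        refine ⟨⟨fun t ht => ?_, card_pair hab.ne⟩, by omega, hcn⟩
        simp only [mem_insert, mem_singleton] at ht
        simp only [mem_Icc]
        omega
      · ext t
        simp only [mem_insert, mem_singleton]
        tauto
  calc F.card ≤ _ := card_le_card hcover
    _ ≤ _ := card_union_le _ _
    _ ≤ ((Icc 1 p).powersetCard 2 ×ˢ Ioc m n).card + ((Icc 1 m).powersetCard 3).card := by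
      gcongr
      exact card_image_le
    _ = p.choose 2 * (n - m) + m.choose 3 := by
      rw [card_product, card_powersetCard, card_powersetCard, Nat.card_Icc, Nat.card_Icc,
        Nat.card_Ioc, Nat.add_sub_cancel, Nat.add_sub_cancel]

theorem choose_bound_mul_le_weighted_sum {n s p : ℕ} (hps : p ≤ s) (hn : 2 * s + 1 ≤ n) :
    (s + 1).choose 2 * (p.choose 2 * (n - (2 * s + 1 - p)) + (2 * s + 1 - p).choose 3) ≤
      ((s + 1).choose 2 - p.choose 2) * (2 * s + 1).choose 3 +
        p.choose 2 * ((n - s - 1) * (s + 1).choose 2 + (s + 1).choose 3) := by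
  have hchoose : p.choose 2 ≤ (s + 1).choose 2 := Nat.choose_le_choose 2 (by omega)
  rw [← Nat.cast_le (α := ℚ)]
  push_cast [Nat.cast_sub hchoose, Nat.cast_sub (by omega : 2 * s + 1 - p ≤ n),
    Nat.cast_sub (by omega : p ≤ 2 * s + 1), Nat.sub_sub, Nat.cast_sub (by omega : s + 1 ≤ n),
    Nat.cast_choose_two, Nat.cast_choose_three]
  have hps' : (p : ℚ) ≤ s := by exact_mod_cast hps
  -- `n` cancels, and the right side exceeds the left by exactly `key / 6`.
  have key : 0 ≤ (s : ℚ) * p * (s * (s - p) * (6 * s + p) + 8 * s ^ 2 - 2 * s - (p - 1) ^ 2) := by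
    rcases Nat.eq_zero_or_pos p with rfl | hp
    · simp
    have hp' : (1 : ℚ) ≤ p := by exact_mod_cast hp
    have hcubic : 0 ≤ (s : ℚ) * (s - p) * (6 * s + p) := by
      apply mul_nonneg (mul_nonneg _ _) <;> linarith
    apply mul_nonneg (by positivity)
    nlinarith
  linear_combination key / 6

theorem choose_bound_le_max {n s p : ℕ} (hs : 0 < s) (hps : p ≤ s) (hn : 2 * s + 1 ≤ n) :
    p.choose 2 * (n - (2 * s + 1 - p)) + (2 * s + 1 - p).choose 3 ≤
      max ((n - s - 1) * (s + 1).choose 2 + (s + 1).choose 3) ((2 * s + 1).choose 3) := by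
  rw [max_comm]
  exact Nat.le_max_of_mul_le_add_mul (Nat.choose_pos (by omega))
    (Nat.choose_le_choose 2 (by omega)) (choose_bound_mul_le_weighted_sum hps hn)

theorem case_shadow_le_general (n s : ℕ) (hs : 3 ≤ s) (hn : 2 * s + 2 ≤ n)
    (F : Finset (Finset ℕ))
    (hF : ∀ e ∈ F, e ⊆ Finset.Icc 1 n ∧ e.card = 3)
    (hst : IsStable n F)
    (hnus : matchNum (shadow2 F) ≤ s) :
    F.card ≤ max (Nat.choose (n - 1) 2)
      (max ((n - s - 1) * Nat.choose (s + 1) 2 + Nat.choose (s + 1) 3)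
        (Nat.choose (2 * s + 1) 3)) := by
  obtain ⟨p, hps, hbound⟩ := hst.exists_bound_of_matchNum_shadow2_le (by omega) hF hnus
  calc F.card ≤ p.choose 2 * (n - (2 * s + 1 - p)) + (2 * s + 1 - p).choose 3 :=
        card_le_choose_mul_add_choose hF hbound
    _ ≤ _ := choose_bound_le_max (by omega) hps (by omega)
    _ ≤ _ := le_max_right _ _

/-- Lemma 3.3: the case nu(shadow F) ≤ s. -/
theorem case_shadow_le (n s : ℕ) (hs : 3 ≤ s) (hn : 2 * s + 2 ≤ n)
    (F : Finset (Finset ℕ))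
    (hF : ∀ e ∈ F, e ⊆ Finset.Icc 1 n ∧ e.card = 3)
    (hst : IsStable n F)
    (hU : HasU F s (2 * s + 1))
    (hnus : matchNum (shadow2 F) ≤ s) :
    F.card ≤ max (Nat.choose (n - 1) 2)
      (max ((n - s - 1) * Nat.choose (s + 1) 2 + Nat.choose (s + 1) 3)
        (Nat.choose (2 * s + 1) 3)) :=
  case_shadow_le_general n s hs hn F hF hst hnus
end

section
/- Let n and s be integers with s ≥ 3 and n ≥ 2s + 2, and let F be a stable 3-graph with vertex set [n] that has property U(s, 2s+1). Suppose {1, 2, 2s+2} ∈ F and every pair in M := { {i, 2s+5−i} : 4 ≤ i ≤ s+2 } belongs to the shadow ∂F. Then for every e ∈ M, the set e ∪ {3} is not an edge of F; in particular {3, s+2, s+3} ∉ F. -/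
open Finset

/-- Claim 3 of Case 4 in Lemma 3.5: no edge of the matching
M = {{i, 2s+5-i} : 4 ≤ i ≤ s+2} extends by the vertex 3 to an edge of F;
in particular {3, s+2, s+3} is not an edge of F. -/
theorem case4_claim3 (n s : ℕ) (hs : 3 ≤ s) (hn : 2 * s + 2 ≤ n)
    (F : Finset (Finset ℕ))
    (hF : ∀ e ∈ F, e ⊆ Finset.Icc 1 n ∧ e.card = 3)
    (hst : IsStable n F)
    (hU : HasU F s (2 * s + 1))
    (h122 : ({1, 2, 2 * s + 2} : Finset ℕ) ∈ F)
    (hM : ∀ e ∈ (Finset.Icc 4 (s + 2)).image (fun i => ({i, 2 * s + 5 - i} : Finset ℕ)),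
      e ∈ shadow2 F) :
    (∀ e ∈ (Finset.Icc 4 (s + 2)).image (fun i => ({i, 2 * s + 5 - i} : Finset ℕ)),
      e ∪ {3} ∉ F) ∧ ({3, s + 2, s + 3} : Finset ℕ) ∉ F := by
  classical
  -- choose, for each j in [4, s+2], an edge g j of F containing {j, 2s+5-j}
  have hg : ∀ j : ℕ, ∃ g, (4 ≤ j → j ≤ s + 2 →
      g ∈ F ∧ ({j, 2 * s + 5 - j} : Finset ℕ) ⊆ g) := by
    intro j
    by_cases h4 : 4 ≤ j
    · by_cases h2 : j ≤ s + 2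
      · have := hM _ (Finset.mem_image.mpr ⟨j, Finset.mem_Icc.mpr ⟨h4, h2⟩, rfl⟩)
        simp only [shadow2, Finset.mem_biUnion, Finset.mem_powersetCard] at this
        obtain ⟨g, hgF, hsub, _⟩ := this
        exact ⟨g, fun _ _ => ⟨hgF, hsub⟩⟩
      · exact ⟨∅, fun _ h => absurd h h2⟩
    · exact ⟨∅, fun h => absurd h h4⟩
  choose g hg using hg
  have key : ∀ i, 4 ≤ i → i ≤ s + 2 → ({i, 2 * s + 5 - i} : Finset ℕ) ∪ {3} ∉ F := by
    intro i hi4 his hB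
    set B : Finset ℕ := ({i, 2 * s + 5 - i} : Finset ℕ) ∪ {3} with hBdef
    set f : Fin s → Finset ℕ := fun k =>
      if (k : ℕ) = 0 then ({1, 2, 2 * s + 2} : Finset ℕ)
      else if (k : ℕ) + 3 = i then B
      else g ((k : ℕ) + 3) with hfdef
    have hfF : ∀ k, f k ∈ F := by
      intro k
      simp only [hfdef]
      split
      · exact h122
      · split
        · exact hB
        · rename_i hk0 _
          have hk : (k : ℕ) < s := k.isLt
          exact (hg ((k : ℕ) + 3) (by omega) (by omega)).1
    have hsub : Finset.Icc 1 (2 * s + 2) ⊆ Finset.univ.biUnion f := by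
      intro m hm
      rw [Finset.mem_Icc] at hm
      rw [Finset.mem_biUnion]
      by_cases hm1 : m = 1 ∨ m = 2 ∨ m = 2 * s + 2
      · refine ⟨⟨0, by omega⟩, Finset.mem_univ _, ?_⟩
        have hf0 : f ⟨0, by omega⟩ = ({1, 2, 2 * s + 2} : Finset ℕ) := by
          simp [hfdef]
        rw [hf0]
        simp only [Finset.mem_insert, Finset.mem_singleton]
        tauto
      · by_cases hm3 : m = 3
        · refine ⟨⟨i - 3, by omega⟩, Finset.mem_univ _, ?_⟩
          simp only [hfdef, Fin.val_mk]
          rw [if_neg (by omega), if_pos (by omega)]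
          simp only [hBdef, Finset.mem_union, Finset.mem_insert, Finset.mem_singleton]
          omega
        · by_cases hm4 : m ≤ s + 2
          · -- 4 ≤ m ≤ s + 2
            refine ⟨⟨m - 3, by omega⟩, Finset.mem_univ _, ?_⟩
            simp only [hfdef, Fin.val_mk]
            rw [if_neg (by omega)]
            by_cases hmi : m - 3 + 3 = i
            · rw [if_pos hmi]
              simp only [hBdef, Finset.mem_union, Finset.mem_insert,
                Finset.mem_singleton]
              omega
            · rw [if_neg hmi]
              have := (hg (m - 3 + 3) (by omega) (by omega)).2
              apply this
              simp only [Finset.mem_insert, Finset.mem_singleton]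
              omega
          · -- s + 3 ≤ m ≤ 2s + 1
            set j : ℕ := 2 * s + 5 - m with hj
            have hj4 : 4 ≤ j := by omega
            have hjs : j ≤ s + 2 := by omega
            refine ⟨⟨j - 3, by omega⟩, Finset.mem_univ _, ?_⟩
            simp only [hfdef, Fin.val_mk]
            rw [if_neg (by omega)]
            by_cases hji : j - 3 + 3 = i
            · rw [if_pos hji]
              simp only [hBdef, Finset.mem_union, Finset.mem_insert,
                Finset.mem_singleton]
              omega
            · rw [if_neg hji]
              have := (hg (j - 3 + 3) (by omega) (by omega)).2
              apply this
              simp only [Finset.mem_insert, Finset.mem_singleton]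
              omega
    have hcard : (Finset.Icc 1 (2 * s + 2)).card ≤ (Finset.univ.biUnion f).card :=
      Finset.card_le_card hsub
    rw [Nat.card_Icc] at hcard
    have := hU f hfF
    omega
  constructor
  · intro e he
    obtain ⟨i, hi, rfl⟩ := Finset.mem_image.mp he
    rw [Finset.mem_Icc] at hi
    exact key i hi.1 hi.2
  · intro hmem
    apply key (s + 2) (by omega) le_rfl
    have heq : ({s + 2, 2 * s + 5 - (s + 2)} : Finset ℕ) ∪ {3} = {3, s + 2, s + 3} := by
      rw [show 2 * s + 5 - (s + 2) = s + 3 from by omega]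
      ext x
      simp only [Finset.mem_union, Finset.mem_insert, Finset.mem_singleton]
      tauto
    rw [heq]
    exact hmem
end
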